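/- arXiv:2411.02681 — 8 statements merged into one kernel-verified Lean document; each statement's English description precedes it below -/
import Mathlib

section
/- Let k ≥ 1, n = 2^k, d = 2^{k−1}, ζ = exp(2πi/n), and K = ℚ(ζ) ⊆ ℂ with ℚ-basis (1, ζ, …, ζ^{d−1}). For U ∈ K^{N×N} define Ψ(U) ∈ ℚ^{dN×dN} as the N×N block matrix whose (i,j) block is M_{U_{ij}}, the matrix of multiplication by U_{ij} in the chosen basis. Then Ψ(1_N) = 1_{dN}, Ψ(UV) = Ψ(U)Ψ(V) for all U, V ∈ K^{N×N}, and if U is unitary (i.e., U†U = 1_N, where U† is the conjugate transpose, conjugation being complex conjugation on K ⊆ ℂ), then Ψ(U) is orthogonal: Ψ(U)ᵀΨ(U) = 1_{dN}. In particular Ψ restricts to a group homomorphism from the unitary group U(N, K) to the orthogonal group O(dN, ℚ). -/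
/-!
`Ψ` is the regular representation `a ↦ M_a` applied entrywise, followed by flattening the
blocks, so it is a ring homomorphism. Since `ζ ^ d = -1`, multiplication by `ζ` permutes the
power basis up to signs, so `M_ζ` is orthogonal and `M_ζᵀ = M_{ζ⁻¹} = M_{conj ζ}`. As `a ↦ M_aᵀ`
is again multiplicative on the commutative field `K`, this gives `M_aᵀ = M_{conj a}` for all `a`,
hence `Ψ(U)ᵀ = Ψ(U†)` and `Ψ(U)ᵀ Ψ(U) = Ψ(U† U) = 1`.
-/

open Matrix

section SignedShift

variable {R A : Type*} [CommRing R] [CommRing A] [Algebra R A] {d : ℕ} [NeZero d]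
  {B : Module.Basis (Fin d) R A} {z : A}

theorem mul_basis_of_pow_eq_neg_one (hB : ∀ i : Fin d, B i = z ^ (i : ℕ)) (hz : z ^ d = -1)
    (a : Fin d) : z * B a = (if (a : ℕ) + 1 = d then (-1 : R) else 1) • B (a + 1) := by
  by_cases h : (a : ℕ) + 1 = d
  · have h0 : a + 1 = 0 := Fin.ext (by simp [Fin.val_add, h])
    rw [if_pos h, h0, hB a, ← pow_succ', h, hz, hB 0]
    simp
  · have hsucc : ((a + 1 : Fin d) : ℕ) = (a : ℕ) + 1 := by
      simp [Fin.val_add, Nat.mod_eq_of_lt (lt_of_le_of_ne a.2 h)]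
    rw [if_neg h, one_smul, hB a, hB (a + 1), hsucc, ← pow_succ']

theorem leftMulMatrix_apply_of_pow_eq_neg_one (hB : ∀ i : Fin d, B i = z ^ (i : ℕ))
    (hz : z ^ d = -1) (m a : Fin d) :
    Algebra.leftMulMatrix B z m a
      = (if (a : ℕ) + 1 = d then (-1 : R) else 1) * (if m = a + 1 then 1 else 0) := by
  rw [Algebra.leftMulMatrix_eq_repr_mul, mul_basis_of_pow_eq_neg_one hB hz a, map_smul,
    Finsupp.smul_apply, B.repr_self, Finsupp.single_apply, smul_eq_mul]
  simp [eq_comm]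

theorem transpose_leftMulMatrix_mul_self_of_pow_eq_neg_one
    (hB : ∀ i : Fin d, B i = z ^ (i : ℕ)) (hz : z ^ d = -1) :
    (Algebra.leftMulMatrix B z)ᵀ * Algebra.leftMulMatrix B z = 1 := by
  ext a b
  simp only [mul_apply, transpose_apply, leftMulMatrix_apply_of_pow_eq_neg_one hB hz, one_apply,
    mul_ite, mul_one, mul_zero, ite_mul, zero_mul, Finset.sum_ite_eq', Finset.mem_univ, if_true]
  by_cases hab : a = b
  · subst hab
    split_ifs <;> simp_all
  · have hne : b + 1 ≠ a + 1 := fun h => hab (add_right_cancel h).symm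
    simp [hne, hab]

theorem transpose_leftMulMatrix_of_pow_eq_neg_one (hB : ∀ i : Fin d, B i = z ^ (i : ℕ))
    (hz : z ^ d = -1) {w : A} (hzw : z * w = 1) (x : A) :
    (Algebra.leftMulMatrix B x)ᵀ
      = Algebra.leftMulMatrix B (∑ i : Fin d, B.repr x i • w ^ (i : ℕ)) := by
  have hw : (Algebra.leftMulMatrix B z)ᵀ = Algebra.leftMulMatrix B w :=
    left_inv_eq_right_inv (transpose_leftMulMatrix_mul_self_of_pow_eq_neg_one hB hz)
      (by rw [← map_mul, hzw, map_one])
  conv_lhs => rw [← B.sum_repr x]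
  simp only [hB, map_sum, map_smul, map_pow, transpose_sum, transpose_smul, transpose_pow, hw]

end SignedShift

theorem IntermediateField.coe_sum_smul_pow_eq_conj {K : IntermediateField ℚ ℂ} {d : ℕ}
    {B : Module.Basis (Fin d) ℚ K} {z w : K} (hB : ∀ i : Fin d, B i = z ^ (i : ℕ))
    (hw : (w : ℂ) = starRingEnd ℂ z) (x : K) :
    ((∑ i : Fin d, B.repr x i • w ^ (i : ℕ) : K) : ℂ) = starRingEnd ℂ x := by
  conv_rhs => rw [← B.sum_repr x]
  simp [hB, Rat.smul_def, hw]

section BlockMatrix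

variable {R A ι n : Type*} [CommRing R] [CommRing A] [Algebra R A] [Fintype ι] [DecidableEq ι]
  [Fintype n] [DecidableEq n]

/-- The map `Ψ`: the `(i, j)` block of `blockLeftMulMatrix B U` is the matrix of multiplication
by `U i j` in the basis `B`. -/
noncomputable def blockLeftMulMatrix (B : Module.Basis ι R A) :
    Matrix n n A →+* Matrix (n × ι) (n × ι) R :=
  (compRingEquiv n ι R).toRingHom.comp (Algebra.leftMulMatrix B).toRingHom.mapMatrix

theorem transpose_blockLeftMulMatrix (B : Module.Basis ι R A) {σ : A → A}
    (hσ : ∀ a, (Algebra.leftMulMatrix B a)ᵀ = Algebra.leftMulMatrix B (σ a)) (U : Matrix n n A) :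
    (blockLeftMulMatrix B U)ᵀ = blockLeftMulMatrix B (Uᵀ.map σ) := by
  ext p q
  exact congrFun (congrFun (hσ (U q.1 p.1)) p.2) q.2

theorem transpose_blockLeftMulMatrix_mul_self (B : Module.Basis ι R A) {σ : A → A}
    (hσ : ∀ a, (Algebra.leftMulMatrix B a)ᵀ = Algebra.leftMulMatrix B (σ a)) {U : Matrix n n A}
    (hU : Uᵀ.map σ * U = 1) :
    (blockLeftMulMatrix B U)ᵀ * blockLeftMulMatrix B U = 1 := by
  rw [transpose_blockLeftMulMatrix B hσ, ← map_mul, hU, map_one]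

end BlockMatrix

theorem Complex.exp_two_pi_I_div_two_pow_pow_two_pow_pred {k : ℕ} (hk : 1 ≤ k) :
    exp (2 * Real.pi * I / 2 ^ k) ^ 2 ^ (k - 1) = -1 := by
  rw [← exp_nat_mul, ← exp_pi_mul_I]
  congr 1
  obtain ⟨j, rfl⟩ := Nat.exists_eq_add_of_le' hk
  push_cast
  field_simp
  ring

theorem Complex.conj_exp_two_pi_I_div_two_pow (k : ℕ) :
    starRingEnd ℂ (exp (2 * Real.pi * I / 2 ^ k)) = (exp (2 * Real.pi * I / 2 ^ k))⁻¹ := by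
  rw [← exp_conj, ← exp_neg]
  congr 1
  simp [map_div₀, conj_ofReal, map_ofNat]
  ring

set_option synthInstance.maxHeartbeats 400000 in
theorem stmt_2_general (k : ℕ) (hk : 1 ≤ k) (ζ : ℂ)
    (hζ : ζ = Complex.exp (2 * Real.pi * Complex.I / (2 ^ k)))
    (K : IntermediateField ℚ ℂ) (hK : K = IntermediateField.adjoin ℚ {ζ})
    (d : ℕ) (hd : d = 2 ^ (k - 1))
    (B : Module.Basis (Fin d) ℚ K) (hB : ∀ i : Fin d, (B i : ℂ) = ζ ^ (i : ℕ))
    (N : ℕ) :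
    let M : K → Matrix (Fin d) (Fin d) ℚ :=
      fun a => LinearMap.toMatrix B B (Algebra.lmul ℚ K a)
    let Ψ : Matrix (Fin N) (Fin N) K → Matrix (Fin N × Fin d) (Fin N × Fin d) ℚ :=
      fun U => Matrix.of fun p q => M (U p.1 q.1) p.2 q.2
    Ψ 1 = 1 ∧
    (∀ U V : Matrix (Fin N) (Fin N) K, Ψ (U * V) = Ψ U * Ψ V) ∧
    (∀ U : Matrix (Fin N) (Fin N) K,
      (∀ i j, (∑ l, starRingEnd ℂ ((U l i : K) : ℂ) * ((U l j : K) : ℂ))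
          = if i = j then 1 else 0) →
      (Ψ U)ᵀ * Ψ U = 1) := by
  intro M Ψ
  have hΨ : Ψ = blockLeftMulMatrix B := rfl
  have : NeZero d := ⟨by simp [hd]⟩
  let z : K := ⟨ζ, hK ▸ IntermediateField.mem_adjoin_simple_self ℚ ζ⟩
  have hBz : ∀ i : Fin d, B i = z ^ (i : ℕ) := fun i => Subtype.ext (by simp [hB, z])
  have hzd : z ^ d = -1 :=
    Subtype.ext (by simp [z, hζ, hd, Complex.exp_two_pi_I_div_two_pow_pow_two_pow_pred hk])
  have hz0 : z ≠ 0 := fun h => by simp [h, NeZero.ne d] at hzd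
  have hconj : ((z⁻¹ : K) : ℂ) = starRingEnd ℂ z := by
    simp [z, hζ, Complex.conj_exp_two_pi_I_div_two_pow]
  have hσ := transpose_leftMulMatrix_of_pow_eq_neg_one hBz hzd (mul_inv_cancel₀ hz0)
  refine ⟨by rw [hΨ, map_one], fun U V => by rw [hΨ, map_mul],
    fun U hU => hΨ ▸ transpose_blockLeftMulMatrix_mul_self B hσ ?_⟩
  ext i j
  rw [mul_apply, IntermediateField.coe_sum, one_apply]
  simp only [IntermediateField.coe_mul, map_apply, transpose_apply,
    IntermediateField.coe_sum_smul_pow_eq_conj hBz hconj, hU i j]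
  split_ifs <;> simp

set_option synthInstance.maxHeartbeats 400000 in
theorem stmt_2 (k : ℕ) (hk : 1 ≤ k) (ζ : ℂ)
    (hζ : ζ = Complex.exp (2 * Real.pi * Complex.I / (2 ^ k)))
    (K : IntermediateField ℚ ℂ) (hK : K = IntermediateField.adjoin ℚ {ζ})
    (d : ℕ) (hd : d = 2 ^ (k - 1))
    (B : Module.Basis (Fin d) ℚ K) (hB : ∀ i : Fin d, (B i : ℂ) = ζ ^ (i : ℕ))
    (N : ℕ) (hN : 1 ≤ N) :
    let M : K → Matrix (Fin d) (Fin d) ℚ :=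
      fun a => LinearMap.toMatrix B B (Algebra.lmul ℚ K a)
    let Ψ : Matrix (Fin N) (Fin N) K → Matrix (Fin N × Fin d) (Fin N × Fin d) ℚ :=
      fun U => Matrix.of fun p q => M (U p.1 q.1) p.2 q.2
    Ψ 1 = 1 ∧
    (∀ U V : Matrix (Fin N) (Fin N) K, Ψ (U * V) = Ψ U * Ψ V) ∧
    (∀ U : Matrix (Fin N) (Fin N) K,
      (∀ i j, (∑ l, starRingEnd ℂ ((U l i : K) : ℂ) * ((U l j : K) : ℂ))
          = if i = j then 1 else 0) →
      (Ψ U)ᵀ * Ψ U = 1) :=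
  stmt_2_general k hk ζ hζ K hK d hd B hB N
end

section
/- Let n ≥ 1, let U be a unitary 2^n × 2^n complex matrix with Pauli coefficients a_x = 2^{−n} Tr(P_x U), and let φ ∈ ℂ^{2^n} be a unit vector. Define ψ' := ∑_{x ∈ ({0,1}²)^n} a_x e_x ⊗ P_x φ ∈ ℂ^{4^n} ⊗ ℂ^{2^n}, where (e_x) is the standard basis of ℂ^{4^n} indexed by x. For y ∈ ({0,1}²)^n let y_H := H^{⊗2n} e_y where H = (1/√2)[[1,1],[1,−1]] is the Hadamard matrix. Then for every y, ‖(|y_H⟩⟨y_H| ⊗ I_{2^n}) ψ'‖² = 2^{−2n}. -/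
open Matrix

/-- The single-qubit Pauli matrices, indexed by pairs of bits:
`σ₀₀ = I`, `σ₀₁ = X`, `σ₁₀ = Y`, `σ₁₁ = Z`. -/
noncomputable def pauli : Bool × Bool → Matrix (Fin 2) (Fin 2) ℂ
  | (false, false) => !![1, 0; 0, 1]
  | (false, true)  => !![0, 1; 1, 0]
  | (true, false)  => !![0, -Complex.I; Complex.I, 0]
  | (true, true)   => !![1, 0; 0, -1]

/-- The `n`-fold Kronecker product `σ_{x 0} ⊗ ⋯ ⊗ σ_{x (n-1)}`. -/
noncomputable def PauliTensor (n : ℕ) (x : Fin n → Bool × Bool) :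
    Matrix (Fin n → Fin 2) (Fin n → Fin 2) ℂ :=
  Matrix.of fun i j => ∏ t, pauli (x t) (i t) (j t)

/-- Entry of the Hadamard matrix `H = (1/√2)[[1,1],[1,−1]]`, rows/columns indexed by bits. -/
noncomputable def hadEntry (b c : Bool) : ℂ :=
  (Real.sqrt 2 : ℂ)⁻¹ * (if b && c then -1 else 1)

/-! The Hadamard transform inverts the Pauli expansion up to a Pauli conjugation. On one
qubit, `½ ∑_b (-1)^(b·c) σ_b ⊗ σ_b` is the swap `½ ∑_b σ_b ⊗ σ_b` twisted by
`σ_{c.swap} ⊗ σ_{c.swap}`; taking the tensor product over the qubits gives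
`∑ₓ (y_H)ₓ aₓ Pₓ = 2⁻ⁿ P_w U P_w` with `w = swap ∘ y`. As `y_H` is real,
`(⟨y_H| ⊗ I) ψ' = 2⁻ⁿ P_w U P_w φ`, so the projected vector is the product of the unit vector
`y_H` with a vector of norm `2⁻ⁿ`, `P_w U P_w` being unitary. -/

namespace Matrix

section PiKronecker

variable {ι m R : Type*} [Fintype ι] [CommSemiring R]

def piKronecker (A : ι → Matrix m m R) : Matrix (ι → m) (ι → m) R :=
  of fun i j => ∏ t, A t (i t) (j t)

theorem piKronecker_mul [DecidableEq ι] [Fintype m] (A B : ι → Matrix m m R) :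
    piKronecker A * piKronecker B = piKronecker (A * B) := by
  ext i j
  simp only [piKronecker, mul_apply, of_apply, Pi.mul_apply, ← Finset.prod_mul_distrib]
  exact (Finset.prod_univ_sum (fun _ => Finset.univ) fun t k => A t (i t) k * B t k (j t)).symm

theorem piKronecker_one [DecidableEq m] : piKronecker (1 : ι → Matrix m m R) = 1 := by
  ext i j
  simp only [piKronecker, of_apply, Pi.one_apply, one_apply]
  by_cases h : i = j
  · simp [h]
  · obtain ⟨t, ht⟩ := Function.ne_iff.mp h
    rw [if_neg h]
    exact Finset.prod_eq_zero (Finset.mem_univ t) (if_neg ht)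

theorem piKronecker_conjTranspose [StarRing R] (A : ι → Matrix m m R) :
    (piKronecker A)ᴴ = piKronecker fun t => (A t)ᴴ := by
  ext i j
  simp [piKronecker, conjTranspose_apply, star_prod]

end PiKronecker

theorem norm_toLp_mulVec_of_mem_unitaryGroup {𝕜 n : Type*} [RCLike 𝕜] [Fintype n]
    [DecidableEq n] {M : Matrix n n 𝕜} (hM : M ∈ unitaryGroup n 𝕜) (v : n → 𝕜) :
    ‖WithLp.toLp 2 (M *ᵥ v)‖ = ‖WithLp.toLp 2 v‖ := by
  rw [← toEuclideanCLM_toLp]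
  exact ContinuousLinearMap.norm_map_of_mem_unitary (Unitary.map_mem toEuclideanCLM hM) _

end Matrix

theorem EuclideanSpace.norm_toLp_mul {𝕜 ι κ : Type*} [RCLike 𝕜] [Fintype ι] [Fintype κ]
    (f : ι → 𝕜) (g : κ → 𝕜) :
    ‖WithLp.toLp 2 (fun p : ι × κ => f p.1 * g p.2)‖ =
      ‖WithLp.toLp 2 f‖ * ‖WithLp.toLp 2 g‖ := by
  simp only [EuclideanSpace.norm_eq, ← Real.sqrt_mul (Finset.sum_nonneg fun _ _ => sq_nonneg _),
    Finset.sum_mul_sum, Fintype.sum_prod_type, norm_mul, mul_pow]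

theorem pauli_conjTranspose (b : Bool × Bool) : (pauli b)ᴴ = pauli b := by
  ext i j
  rcases b with ⟨_ | _, _ | _⟩ <;> fin_cases i <;> fin_cases j <;> simp [pauli]

theorem pauli_mul_self (b : Bool × Bool) : pauli b * pauli b = 1 := by
  ext i j
  rcases b with ⟨_ | _, _ | _⟩ <;> fin_cases i <;> fin_cases j <;>
    simp [pauli, mul_apply, Fin.sum_univ_two]

theorem conj_hadEntry (b c : Bool) : starRingEnd ℂ (hadEntry b c) = hadEntry b c := by
  cases b <;> cases c <;> simp [hadEntry]

theorem norm_hadEntry (b c : Bool) : ‖hadEntry b c‖ = (Real.sqrt 2)⁻¹ := by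
  simp [hadEntry, apply_ite]

theorem hadEntry_mul_hadEntry (b c b' c' : Bool) : hadEntry b c * hadEntry b' c' =
    2⁻¹ * ((if b && c then -1 else 1) * (if b' && c' then -1 else 1)) := by
  rw [hadEntry, hadEntry, mul_mul_mul_comm, ← mul_inv, ← Complex.ofReal_mul,
    Real.mul_self_sqrt zero_le_two, Complex.ofReal_ofNat]

theorem sum_hadEntry_mul_pauli_apply (c : Bool × Bool) (i j k l : Fin 2) :
    ∑ b : Bool × Bool, hadEntry b.1 c.1 * hadEntry b.2 c.2 * (pauli b k l * pauli b i j)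
      = pauli c.swap i l * pauli c.swap k j := by
  simp only [Fintype.sum_prod_type, Fintype.sum_bool, hadEntry_mul_hadEntry]
  rcases c with ⟨_ | _, _ | _⟩ <;> fin_cases i <;> fin_cases j <;> fin_cases k <;>
    fin_cases l <;> norm_num [pauli]

noncomputable def hadamardVec {n : ℕ} (y x : Fin n → Bool × Bool) : ℂ :=
  ∏ j, hadEntry (x j).1 (y j).1 * hadEntry (x j).2 (y j).2

noncomputable def pauliCoeff {n : ℕ} (U : Matrix (Fin n → Fin 2) (Fin n → Fin 2) ℂ)
    (x : Fin n → Bool × Bool) : ℂ :=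
  ((2 : ℂ) ^ n)⁻¹ * (PauliTensor n x * U).trace

section PauliTensor

variable {n : ℕ}

theorem PauliTensor_eq_piKronecker (x : Fin n → Bool × Bool) :
    PauliTensor n x = piKronecker fun t => pauli (x t) := rfl

theorem PauliTensor_mem_unitaryGroup (x : Fin n → Bool × Bool) :
    PauliTensor n x ∈ unitaryGroup (Fin n → Fin 2) ℂ := by
  have hself : (PauliTensor n x)ᴴ = PauliTensor n x := by
    simp only [PauliTensor_eq_piKronecker, piKronecker_conjTranspose, pauli_conjTranspose]
  have hsq : PauliTensor n x * PauliTensor n x = 1 := by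
    rw [PauliTensor_eq_piKronecker, piKronecker_mul]
    simp only [Pi.mul_def, pauli_mul_self]
    exact piKronecker_one
  rw [mem_unitaryGroup_iff', star_eq_conjTranspose, hself, hsq]

theorem conj_hadamardVec (y x : Fin n → Bool × Bool) :
    starRingEnd ℂ (hadamardVec y x) = hadamardVec y x := by
  simp only [hadamardVec, map_prod, map_mul, conj_hadEntry]

theorem norm_toLp_hadamardVec (y : Fin n → Bool × Bool) :
    ‖WithLp.toLp 2 (hadamardVec y)‖ = 1 := by
  have hentry : ∀ x, ‖hadamardVec y x‖ ^ 2 = ((4 : ℝ) ^ n)⁻¹ := by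
    intro x
    simp only [hadamardVec, norm_prod, norm_mul, norm_hadEntry, Finset.prod_const,
      Finset.card_univ, Fintype.card_fin, ← pow_mul]
    rw [← mul_inv, Real.mul_self_sqrt zero_le_two, pow_mul', inv_pow, inv_pow]
    norm_num
  rw [EuclideanSpace.norm_eq, Real.sqrt_eq_one]
  simp only [hentry, Finset.sum_const, Finset.card_univ, Fintype.card_fun, Fintype.card_prod,
    Fintype.card_bool, Fintype.card_fin, nsmul_eq_mul]
  push_cast
  exact mul_inv_cancel₀ (by positivity)

theorem sum_hadamardVec_mul_PauliTensor_apply (y : Fin n → Bool × Bool)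
    (i j k l : Fin n → Fin 2) :
    ∑ x, hadamardVec y x * (PauliTensor n x k l * PauliTensor n x i j)
      = PauliTensor n (Prod.swap ∘ y) i l * PauliTensor n (Prod.swap ∘ y) k j := by
  simp only [hadamardVec, PauliTensor, of_apply, ← Finset.prod_mul_distrib]
  rw [← Fintype.prod_sum fun t (b : Bool × Bool) =>
    hadEntry b.1 (y t).1 * hadEntry b.2 (y t).2 * (pauli b (k t) (l t) * pauli b (i t) (j t))]
  exact Finset.prod_congr rfl fun t _ =>
    sum_hadEntry_mul_pauli_apply (y t) (i t) (j t) (k t) (l t)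

theorem sum_hadamardVec_mul_pauliCoeff_smul_PauliTensor
    (U : Matrix (Fin n → Fin 2) (Fin n → Fin 2) ℂ) (y : Fin n → Bool × Bool) :
    ∑ x, (hadamardVec y x * pauliCoeff U x) • PauliTensor n x
      = ((2 : ℂ) ^ n)⁻¹ •
          (PauliTensor n (Prod.swap ∘ y) * U * PauliTensor n (Prod.swap ∘ y)) := by
  set P := PauliTensor n (Prod.swap ∘ y)
  ext i j
  calc (∑ x, (hadamardVec y x * pauliCoeff U x) • PauliTensor n x) i j
      = ((2 : ℂ) ^ n)⁻¹ * ∑ k, ∑ l, U l k *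
          ∑ x, hadamardVec y x * (PauliTensor n x k l * PauliTensor n x i j) := by
        simp only [Matrix.sum_apply, Matrix.smul_apply, smul_eq_mul, pauliCoeff, trace,
          diag_apply, mul_apply, Finset.mul_sum, Finset.sum_mul]
        rw [Finset.sum_comm]
        refine Finset.sum_congr rfl fun k _ => ?_
        rw [Finset.sum_comm]
        exact Finset.sum_congr rfl fun l _ => Finset.sum_congr rfl fun x _ => by ring
    _ = ((2 : ℂ) ^ n)⁻¹ * ∑ k, ∑ l, P i l * U l k * P k j := by
        simp only [sum_hadamardVec_mul_PauliTensor_apply]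
        congr 1
        exact Finset.sum_congr rfl fun k _ => Finset.sum_congr rfl fun l _ => by ring
    _ = (((2 : ℂ) ^ n)⁻¹ • (P * U * P)) i j := by
        simp only [Matrix.smul_apply, smul_eq_mul, mul_apply, Finset.sum_mul]

end PauliTensor

theorem stmt_8_general (n : ℕ)
    (U : Matrix (Fin n → Fin 2) (Fin n → Fin 2) ℂ) (hU : Uᴴ * U = 1)
    (φ : EuclideanSpace ℂ (Fin n → Fin 2)) (hφ : ‖φ‖ = 1)
    (y : Fin n → Bool × Bool) :
    let a : (Fin n → Bool × Bool) → ℂ :=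
      fun x => ((2 : ℂ) ^ n)⁻¹ * (PauliTensor n x * U).trace
    -- ψ' = ∑ₓ aₓ eₓ ⊗ Pₓ φ
    let ψ' : EuclideanSpace ℂ ((Fin n → Bool × Bool) × (Fin n → Fin 2)) :=
      (WithLp.equiv 2 _).symm fun p =>
        a p.1 * (PauliTensor n p.1).mulVec (WithLp.equiv 2 _ φ) p.2
    -- y_H = H^{⊗2n} e_y
    let yH : (Fin n → Bool × Bool) → ℂ :=
      fun x => ∏ j, hadEntry (x j).1 (y j).1 * hadEntry (x j).2 (y j).2
    -- (|y_H⟩⟨y_H| ⊗ I) ψ'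
    let projected : EuclideanSpace ℂ ((Fin n → Bool × Bool) × (Fin n → Fin 2)) :=
      (WithLp.equiv 2 _).symm fun p =>
        yH p.1 * ∑ x, starRingEnd ℂ (yH x) * (WithLp.equiv 2 _ ψ') (x, p.2)
    ‖projected‖ ^ 2 = ((2 : ℝ) ^ (2 * n))⁻¹ := by
  intro a ψ' yH projected
  set M := PauliTensor n (Prod.swap ∘ y) * U * PauliTensor n (Prod.swap ∘ y)
  have hM : M ∈ unitaryGroup _ ℂ := mul_mem (mul_mem (PauliTensor_mem_unitaryGroup _)
    (mem_unitaryGroup_iff'.mpr hU)) (PauliTensor_mem_unitaryGroup _)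
  have hprojected : projected =
      WithLp.toLp 2 fun p => hadamardVec y p.1 * (((2 : ℂ) ^ n)⁻¹ • M *ᵥ φ) p.2 := by
    ext p
    change yH p.1 * ∑ x, starRingEnd ℂ (hadamardVec y x) *
      (pauliCoeff U x * (PauliTensor n x *ᵥ φ) p.2) = _
    rw [← smul_mulVec, ← sum_hadamardVec_mul_pauliCoeff_smul_PauliTensor, sum_mulVec]
    simp only [conj_hadamardVec, smul_mulVec, Finset.sum_apply, Pi.smul_apply, smul_eq_mul,
      mul_assoc]
    rfl
  rw [hprojected, EuclideanSpace.norm_toLp_mul, norm_toLp_hadamardVec, WithLp.toLp_smul,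
    norm_smul, norm_toLp_mulVec_of_mem_unitaryGroup hM, WithLp.toLp_ofLp, hφ]
  norm_num
  ring

theorem stmt_8 (n : ℕ) (hn : 1 ≤ n)
    (U : Matrix (Fin n → Fin 2) (Fin n → Fin 2) ℂ) (hU : Uᴴ * U = 1)
    (φ : EuclideanSpace ℂ (Fin n → Fin 2)) (hφ : ‖φ‖ = 1)
    (y : Fin n → Bool × Bool) :
    let a : (Fin n → Bool × Bool) → ℂ :=
      fun x => ((2 : ℂ) ^ n)⁻¹ * (PauliTensor n x * U).trace
    -- ψ' = ∑ₓ aₓ eₓ ⊗ Pₓ φ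
    let ψ' : EuclideanSpace ℂ ((Fin n → Bool × Bool) × (Fin n → Fin 2)) :=
      (WithLp.equiv 2 _).symm fun p =>
        a p.1 * (PauliTensor n p.1).mulVec (WithLp.equiv 2 _ φ) p.2
    -- y_H = H^{⊗2n} e_y
    let yH : (Fin n → Bool × Bool) → ℂ :=
      fun x => ∏ j, hadEntry (x j).1 (y j).1 * hadEntry (x j).2 (y j).2
    -- (|y_H⟩⟨y_H| ⊗ I) ψ'
    let projected : EuclideanSpace ℂ ((Fin n → Bool × Bool) × (Fin n → Fin 2)) :=
      (WithLp.equiv 2 _).symm fun p =>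
        yH p.1 * ∑ x, starRingEnd ℂ (yH x) * (WithLp.equiv 2 _ ψ') (x, p.2)
    ‖projected‖ ^ 2 = ((2 : ℝ) ^ (2 * n))⁻¹ :=
  stmt_8_general n U hU φ hφ y
end

section
/- (Oblivious amplitude amplification) Let H_A and H_B be finite-dimensional complex Hilbert spaces, let e ∈ H_A be a unit vector, let U be a unitary operator on H_A ⊗ H_B, let V be a unitary operator on H_B, and let θ ∈ (0, π/2). Suppose that for every ψ ∈ H_B there is a vector Φ_ψ ∈ H_A ⊗ H_B with Π Φ_ψ = 0 and U(e ⊗ ψ) = sin(θ)·(e ⊗ Vψ) + cos(θ)·Φ_ψ, where Π := |e⟩⟨e| ⊗ I. Let R := 2Π − I and S := −U R U† R. Then for every natural number ℓ and every ψ ∈ H_B, S^ℓ U (e ⊗ ψ) = sin((2ℓ+1)θ)·(e ⊗ Vψ) + cos((2ℓ+1)θ)·Φ_ψ. -/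
/-!
Write `Π = E Eᴴ`, where `E = e ⊗ I` is the isometry `χ ↦ e ⊗ χ`. Compressing the hypothesis
by `Eᴴ` gives `Eᴴ U E = sin θ • V`, hence `Π U† (e ⊗ Vψ) = sin θ • (e ⊗ ψ)` because `V` is
unitary. With this, `S = -U R U† R` maps the plane spanned by `g = e ⊗ Vψ` and `Φ ψ` to itself
and acts on it as the rotation by `2θ`:
`S (sin α • g + cos α • Φ ψ) = sin (α + 2θ) • g + cos (α + 2θ) • Φ ψ`.
Since `U (e ⊗ ψ) = sin θ • g + cos θ • Φ ψ`, applying `S` `ℓ` times reaches the angle `(2ℓ+1)θ`.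
-/

open Matrix

section LeftTensor

variable {R m n : Type*} [CommSemiring R] [DecidableEq n]

def leftTensor (u : m → R) : Matrix (m × n) n R :=
  of fun r j => u r.1 * (1 : Matrix n n R) r.2 j

theorem leftTensor_mulVec [Fintype n] (u : m → R) (χ : n → R) :
    leftTensor u *ᵥ χ = fun r => u r.1 * χ r.2 := by
  funext r
  simp [leftTensor, mulVec, dotProduct, one_apply]

variable [StarRing R]

theorem leftTensor_mul_conjTranspose [Fintype n] (u : m → R) :
    leftTensor (n := n) u * (leftTensor (n := n) u)ᴴ
      = of fun r s : m × n => u r.1 * starRingEnd R (u s.1) * if r.2 = s.2 then 1 else 0 := by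
  ext r s
  by_cases h : r.2 = s.2 <;>
    simp [Matrix.mul_apply, leftTensor, one_apply, h, eq_comm (a := s.2), starRingEnd_apply]

theorem conjTranspose_leftTensor_mul_self [Fintype m] [Fintype n] (u : m → R) :
    (leftTensor (n := n) u)ᴴ * leftTensor (n := n) u = (star u ⬝ᵥ u) • (1 : Matrix n n R) := by
  ext i j
  by_cases h : i = j <;>
    simp [Matrix.mul_apply, leftTensor, one_apply, dotProduct, Fintype.sum_prod_type, h,
      eq_comm (a := j)]

end LeftTensor

section Reflections

variable {K N : Type*} [Field K] [Fintype N] [DecidableEq N]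

theorem neg_mul_reflections_mulVec {U W P : Matrix N N K} (hUW : U * W = 1) (hWU : W * U = 1)
    {x g φ : N → K} {c d : K} (hUx : U *ᵥ x = c • g + d • φ) (hPx : P *ᵥ x = x)
    (hPg : P *ᵥ g = g) (hPφ : P *ᵥ φ = 0) (hPWg : P *ᵥ W *ᵥ g = c • x)
    (hcd : c ^ 2 + d ^ 2 = 1) (hd : d ≠ 0) (a b : K) :
    -(U * ((2 : K) • P - 1) * W * ((2 : K) • P - 1)) *ᵥ (a • g + b • φ)
      = (a * (d ^ 2 - c ^ 2) + b * (2 * c * d)) • g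
        + (b * (d ^ 2 - c ^ 2) - a * (2 * c * d)) • φ := by
  have hR : ∀ v, ((2 : K) • P - 1) *ᵥ v = (2 : K) • P *ᵥ v - v := fun v => by
    rw [sub_mulVec, smul_mulVec, one_mulVec]
  have hPWφ : P *ᵥ W *ᵥ φ = d • x := by
    -- apply `P` to `x = W U x = c • W g + d • W φ`
    have hx := congrArg (P *ᵥ W *ᵥ ·) hUx
    simp only [mulVec_mulVec, hWU] at hx
    simp only [← mulVec_mulVec, one_mulVec, hPx, mulVec_add, mulVec_smul, hPWg] at hx
    refine smul_right_injective _ hd ?_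
    linear_combination (norm := module) -hx - hcd • x
  have hPWv : P *ᵥ W *ᵥ (a • g - b • φ) = (a * c - b * d) • x := by
    simp only [mulVec_sub, mulVec_smul, hPWg, hPWφ]
    module
  have hUWv : U *ᵥ W *ᵥ (a • g - b • φ) = a • g - b • φ := by
    rw [mulVec_mulVec, hUW, one_mulVec]
  have hRv : ((2 : K) • P - 1) *ᵥ (a • g + b • φ) = a • g - b • φ := by
    rw [hR, mulVec_add, mulVec_smul, mulVec_smul, hPg, hPφ]
    module
  rw [neg_mulVec, ← mulVec_mulVec, hRv, ← mulVec_mulVec, ← mulVec_mulVec, hR, mulVec_sub,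
    mulVec_smul, hPWv, mulVec_smul, hUx, hUWv]
  linear_combination (norm := module) (b * hcd) • φ - (a * hcd) • g

end Reflections

section Isometry

variable {R N n : Type*} [CommRing R] [StarRing R] [Fintype N] [Fintype n] [DecidableEq n]

theorem mul_conjTranspose_mulVec_mulVec {E : Matrix N n R} (hE : Eᴴ * E = 1) (v : n → R) :
    (E * Eᴴ) *ᵥ E *ᵥ v = E *ᵥ v := by
  rw [mulVec_mulVec, Matrix.mul_assoc, hE, Matrix.mul_one]

theorem conjTranspose_mul_mul_eq_smul {E : Matrix N n R} (hE : Eᴴ * E = 1) {U : Matrix N N R}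
    {V : Matrix n n R} {Φ : (n → R) → N → R} {c d : R} (hΦ : ∀ χ, (E * Eᴴ) *ᵥ Φ χ = 0)
    (hU : ∀ χ, U *ᵥ E *ᵥ χ = c • E *ᵥ V *ᵥ χ + d • Φ χ) :
    Eᴴ * U * E = c • V := by
  have hEΦ : ∀ χ, Eᴴ *ᵥ Φ χ = 0 := fun χ => by
    rw [← Matrix.one_mul Eᴴ, ← hE, Matrix.mul_assoc, ← mulVec_mulVec, hΦ, mulVec_zero]
  refine ext_iff_mulVec.mpr fun χ => ?_
  rw [← mulVec_mulVec, ← mulVec_mulVec, hU, mulVec_add, mulVec_smul, mulVec_smul, hEΦ,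
    mulVec_mulVec, hE, one_mulVec, smul_zero, add_zero, smul_mulVec]

theorem mul_conjTranspose_mulVec_conjTranspose_mulVec {E : Matrix N n R}
    {U : Matrix N N R} {V : Matrix n n R} (hV : Vᴴ * V = 1) {c : R}
    (hEUE : Eᴴ * U * E = c • V) (ψ : n → R) :
    (E * Eᴴ) *ᵥ Uᴴ *ᵥ E *ᵥ V *ᵥ ψ = star c • E *ᵥ ψ := by
  have hEUE' : Eᴴ * Uᴴ * E = star c • Vᴴ := by
    rw [← conjTranspose_smul, ← hEUE]
    simp only [conjTranspose_mul, conjTranspose_conjTranspose, Matrix.mul_assoc]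
  have hmat : E * Eᴴ * Uᴴ * E * V = star c • E := calc
    _ = E * (Eᴴ * Uᴴ * E) * V := by simp only [Matrix.mul_assoc]
    _ = star c • E := by rw [hEUE', Matrix.mul_smul, Matrix.smul_mul, Matrix.mul_assoc, hV,
      Matrix.mul_one]
  rw [mulVec_mulVec, mulVec_mulVec, mulVec_mulVec, hmat, smul_mulVec]

end Isometry

theorem pow_mulVec_eq_of_mulVec_eq_add {R N : Type*} [Semiring R] [Fintype N] [DecidableEq N]
    {S : Matrix N N R} {f : ℝ → N → R} {β : ℝ} (hS : ∀ α, S *ᵥ f α = f (α + β)) (ℓ : ℕ) (α : ℝ) :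
    S ^ ℓ *ᵥ f α = f (α + ℓ * β) := by
  induction ℓ generalizing α with
  | zero => simp
  | succ n ih =>
    rw [pow_succ, ← mulVec_mulVec, hS, ih]
    congr 1
    push_cast
    ring

theorem neg_mul_reflections_mulVec_sin_cos {N : Type*} [Fintype N] [DecidableEq N]
    {U W P : Matrix N N ℂ} (hUW : U * W = 1) (hWU : W * U = 1) {x g φ : N → ℂ} {θ : ℝ}
    (hUx : U *ᵥ x = (Real.sin θ : ℂ) • g + (Real.cos θ : ℂ) • φ) (hPx : P *ᵥ x = x)
    (hPg : P *ᵥ g = g) (hPφ : P *ᵥ φ = 0) (hPWg : P *ᵥ W *ᵥ g = (Real.sin θ : ℂ) • x)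
    (hθ : Real.cos θ ≠ 0) (α : ℝ) :
    -(U * ((2 : ℂ) • P - 1) * W * ((2 : ℂ) • P - 1)) *ᵥ
        ((Real.sin α : ℂ) • g + (Real.cos α : ℂ) • φ)
      = (Real.sin (α + 2 * θ) : ℂ) • g + (Real.cos (α + 2 * θ) : ℂ) • φ := by
  rw [neg_mul_reflections_mulVec hUW hWU hUx hPx hPg hPφ hPWg
    (by exact_mod_cast Real.sin_sq_add_cos_sq θ) (by exact_mod_cast hθ),
    Real.sin_add, Real.cos_add, Real.sin_two_mul, Real.cos_two_mul']
  congr 2 <;> push_cast <;> ring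

theorem stmt_9_general (p q : ℕ)
    (e : EuclideanSpace ℂ (Fin p)) (he : ‖e‖ = 1)
    (U : Matrix (Fin p × Fin q) (Fin p × Fin q) ℂ)
    (hU : U ∈ Matrix.unitaryGroup (Fin p × Fin q) ℂ)
    (V : Matrix (Fin q) (Fin q) ℂ) (hV : V ∈ Matrix.unitaryGroup (Fin q) ℂ)
    (θ : ℝ) (hθ : θ ∈ Set.Ioo 0 (Real.pi / 2))
    (Φ : (Fin q → ℂ) → (Fin p × Fin q → ℂ)) :
    let eF : Fin p → ℂ := WithLp.equiv 2 _ e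
    -- Π = |e⟩⟨e| ⊗ I
    let Pi' : Matrix (Fin p × Fin q) (Fin p × Fin q) ℂ :=
      Matrix.of fun r s => eF r.1 * starRingEnd ℂ (eF s.1) * (if r.2 = s.2 then 1 else 0)
    -- R = 2Π − I,  S = −U R U† R
    let R : Matrix (Fin p × Fin q) (Fin p × Fin q) ℂ := (2 : ℂ) • Pi' - 1
    let S : Matrix (Fin p × Fin q) (Fin p × Fin q) ℂ := -(U * R * Uᴴ * R)
    (∀ ψ, Pi'.mulVec (Φ ψ) = 0) →
    (∀ ψ : Fin q → ℂ,
      U.mulVec (fun r => eF r.1 * ψ r.2)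
        = (Real.sin θ : ℂ) • (fun r : Fin p × Fin q => eF r.1 * V.mulVec ψ r.2)
          + (Real.cos θ : ℂ) • Φ ψ) →
    ∀ (ℓ : ℕ) (ψ : Fin q → ℂ),
      (S ^ ℓ * U).mulVec (fun r => eF r.1 * ψ r.2)
        = (Real.sin ((2 * (ℓ : ℝ) + 1) * θ) : ℂ)
            • (fun r : Fin p × Fin q => eF r.1 * V.mulVec ψ r.2)
          + (Real.cos ((2 * (ℓ : ℝ) + 1) * θ) : ℂ) • Φ ψ := by
  intro eF Pi' R S hΦ hUe ℓ ψ
  set E : Matrix (Fin p × Fin q) (Fin q) ℂ := leftTensor eF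
  have hEv : ∀ χ, E *ᵥ χ = fun r => eF r.1 * χ r.2 := leftTensor_mulVec eF
  have hE : Eᴴ * E = 1 := by
    have he' : star eF ⬝ᵥ eF = 1 := by
      have h := inner_self_eq_norm_sq_to_K (𝕜 := ℂ) e
      rw [he, EuclideanSpace.inner_eq_star_dotProduct, dotProduct_comm] at h
      exact h.trans (by norm_num)
    rw [conjTranspose_leftTensor_mul_self, he', one_smul]
  have hPi : Pi' = E * Eᴴ := (leftTensor_mul_conjTranspose eF).symm
  have hUE : ∀ χ, U *ᵥ E *ᵥ χ = (Real.sin θ : ℂ) • E *ᵥ V *ᵥ χ + (Real.cos θ : ℂ) • Φ χ :=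
    fun χ => by rw [hEv, hEv]; exact hUe χ
  have hPWg := mul_conjTranspose_mulVec_conjTranspose_mulVec hV.1
    (conjTranspose_mul_mul_eq_smul hE (hPi ▸ hΦ) hUE) ψ
  rw [Complex.star_def, Complex.conj_ofReal, ← hPi] at hPWg
  have hcos : Real.cos θ ≠ 0 :=
    (Real.cos_pos_of_mem_Ioo ⟨by linarith [hθ.1, Real.pi_pos], hθ.2⟩).ne'
  have hrot := neg_mul_reflections_mulVec_sin_cos (W := Uᴴ) hU.2 hU.1 (hUE ψ)
    (hPi ▸ mul_conjTranspose_mulVec_mulVec hE ψ) (hPi ▸ mul_conjTranspose_mulVec_mulVec hE _)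
    (hΦ ψ) hPWg hcos
  rw [← hEv ψ, ← hEv (V *ᵥ ψ), ← mulVec_mulVec, hUE,
    pow_mulVec_eq_of_mulVec_eq_add (S := S) hrot, show θ + ℓ * (2 * θ) = (2 * ℓ + 1) * θ by ring]

/-- Oblivious amplitude amplification (Berry–Childs–Cleve–Kothari–Somma). -/
theorem stmt_9 (p q : ℕ) (hp : 1 ≤ p) (hq : 1 ≤ q)
    (e : EuclideanSpace ℂ (Fin p)) (he : ‖e‖ = 1)
    (U : Matrix (Fin p × Fin q) (Fin p × Fin q) ℂ)
    (hU : U ∈ Matrix.unitaryGroup (Fin p × Fin q) ℂ)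
    (V : Matrix (Fin q) (Fin q) ℂ) (hV : V ∈ Matrix.unitaryGroup (Fin q) ℂ)
    (θ : ℝ) (hθ : θ ∈ Set.Ioo 0 (Real.pi / 2))
    (Φ : (Fin q → ℂ) → (Fin p × Fin q → ℂ)) :
    let eF : Fin p → ℂ := WithLp.equiv 2 _ e
    -- Π = |e⟩⟨e| ⊗ I
    let Pi' : Matrix (Fin p × Fin q) (Fin p × Fin q) ℂ :=
      Matrix.of fun r s => eF r.1 * starRingEnd ℂ (eF s.1) * (if r.2 = s.2 then 1 else 0)
    -- R = 2Π − I,  S = −U R U† R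
    let R : Matrix (Fin p × Fin q) (Fin p × Fin q) ℂ := (2 : ℂ) • Pi' - 1
    let S : Matrix (Fin p × Fin q) (Fin p × Fin q) ℂ := -(U * R * Uᴴ * R)
    (∀ ψ, Pi'.mulVec (Φ ψ) = 0) →
    (∀ ψ : Fin q → ℂ,
      U.mulVec (fun r => eF r.1 * ψ r.2)
        = (Real.sin θ : ℂ) • (fun r : Fin p × Fin q => eF r.1 * V.mulVec ψ r.2)
          + (Real.cos θ : ℂ) • Φ ψ) →
    ∀ (ℓ : ℕ) (ψ : Fin q → ℂ),
      (S ^ ℓ * U).mulVec (fun r => eF r.1 * ψ r.2)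
        = (Real.sin ((2 * (ℓ : ℝ) + 1) * θ) : ℂ)
            • (fun r : Fin p × Fin q => eF r.1 * V.mulVec ψ r.2)
          + (Real.cos ((2 * (ℓ : ℝ) + 1) * θ) : ℂ) • Φ ψ :=
  stmt_9_general p q e he U hU V hV θ hθ Φ
end

section
/- (Projection Lemma) Let 𝓗 be a nonzero finite-dimensional complex Hilbert space, S ⊆ 𝓗 a nonzero subspace with orthogonal complement S^⊥, and let H_1, H_2 be Hermitian operators on 𝓗. Assume H_2 ψ = 0 for all ψ ∈ S, and ⟨ψ, H_2 ψ⟩ ≥ J‖ψ‖² for all ψ ∈ S^⊥, for some real J > 2‖H_1‖, where ‖H_1‖ is the operator norm. Then λ_min(H_1|_S) − ‖H_1‖²/(J − 2‖H_1‖) ≤ λ_min(H_1 + H_2) ≤ λ_min(H_1|_S), where H_1|_S := Π_S H_1 Π_S restricted to S (Π_S the orthogonal projector onto S), and λ_min(A) denotes the smallest eigenvalue of a Hermitian operator A, i.e., the minimum of ⟨ψ, Aψ⟩ over unit vectors ψ in the relevant space. -/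
/-!
Split a unit vector as `ψ = α + β` with `α ∈ S`, `β ∈ Sᗮ`, and write `a = ‖α‖`,
`b = ‖β‖`, `K = ‖H₁‖`, `λ = λ_min(H₁|_S)`. Since `H₂` kills `S` and is symmetric,
`⟪ψ, H₂ ψ⟫ = ⟪β, H₂ β⟫ ≥ J b²`, while `⟪ψ, H₁ ψ⟫ ≥ λ a² - 2 K a b - K b²`.
With `a² = 1 - b²`, `a ≤ 1` and `λ ≤ K` the sum is at least `λ + (J - 2K) b² - 2 K b`,
and minimising this quadratic in `b` gives `λ - K² / (J - 2K)`. The upper bound holds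
because `H₁ + H₂` and `H₁|_S` have the same Rayleigh quotient on `S`.
-/

/-- The smallest eigenvalue of a Hermitian operator, as the infimum of the
Rayleigh quotient over unit vectors. -/
noncomputable def lmin {E : Type*} [NormedAddCommGroup E] [InnerProductSpace ℂ E]
    (A : E →ₗ[ℂ] E) : ℝ :=
  sInf ((fun ψ => (@inner ℂ E _ ψ (A ψ)).re) '' {ψ : E | ‖ψ‖ = 1})

open scoped InnerProductSpace

section ProjectionLemma

variable {E : Type*} [NormedAddCommGroup E] [InnerProductSpace ℂ E]

theorem abs_re_inner_apply_le (A : E →L[ℂ] E) (x y : E) :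
    |(⟪x, A y⟫_ℂ).re| ≤ ‖A‖ * ‖x‖ * ‖y‖ :=
  calc |(⟪x, A y⟫_ℂ).re| ≤ ‖x‖ * ‖A y‖ :=
        (Complex.abs_re_le_norm _).trans (norm_inner_le_norm _ _)
    _ ≤ ‖x‖ * (‖A‖ * ‖y‖) := by gcongr; exact A.le_opNorm y
    _ = ‖A‖ * ‖x‖ * ‖y‖ := by ring

theorem bddBelow_rayleigh [FiniteDimensional ℂ E] (A : E →ₗ[ℂ] E) :
    BddBelow ((fun ψ => (⟪ψ, A ψ⟫_ℂ).re) '' {ψ : E | ‖ψ‖ = 1}) := by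
  refine ⟨-‖LinearMap.toContinuousLinearMap A‖, ?_⟩
  rintro _ ⟨ψ, hψ : ‖ψ‖ = 1, rfl⟩
  have := abs_re_inner_apply_le (LinearMap.toContinuousLinearMap A) ψ ψ
  rw [hψ, mul_one, mul_one] at this
  exact neg_le_of_abs_le this

theorem lmin_le_re_inner [FiniteDimensional ℂ E] (A : E →ₗ[ℂ] E) {ψ : E} (hψ : ‖ψ‖ = 1) :
    lmin A ≤ (⟪ψ, A ψ⟫_ℂ).re :=
  csInf_le (bddBelow_rayleigh A) ⟨ψ, hψ, rfl⟩

theorem le_lmin [Nontrivial E] (A : E →ₗ[ℂ] E) {c : ℝ}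
    (h : ∀ ψ : E, ‖ψ‖ = 1 → c ≤ (⟪ψ, A ψ⟫_ℂ).re) : c ≤ lmin A := by
  obtain ⟨ψ, hψ⟩ := exists_norm_eq E zero_le_one
  exact le_csInf ⟨_, ψ, hψ, rfl⟩ (by rintro _ ⟨ψ, hψ, rfl⟩; exact h ψ hψ)

theorem lmin_mul_norm_sq_le [FiniteDimensional ℂ E] (A : E →ₗ[ℂ] E) (ψ : E) :
    lmin A * ‖ψ‖ ^ 2 ≤ (⟪ψ, A ψ⟫_ℂ).re := by
  rcases eq_or_ne ψ 0 with rfl | hψ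
  · simp
  have hn : 0 < ‖ψ‖ := norm_pos_iff.mpr hψ
  have hunit : ‖((‖ψ‖⁻¹ : ℝ) : ℂ) • ψ‖ = 1 := by
    rw [norm_smul, Complex.norm_real, norm_inv, norm_norm, inv_mul_cancel₀ hn.ne']
  have hscale : (⟪((‖ψ‖⁻¹ : ℝ) : ℂ) • ψ, A (((‖ψ‖⁻¹ : ℝ) : ℂ) • ψ)⟫_ℂ).re
      = (⟪ψ, A ψ⟫_ℂ).re / ‖ψ‖ ^ 2 := by
    rw [map_smul, inner_smul_left, inner_smul_right, Complex.conj_ofReal, ← mul_assoc,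
      ← Complex.ofReal_mul, Complex.re_ofReal_mul]
    field_simp
  have := lmin_le_re_inner A hunit
  rw [hscale, le_div_iff₀ (by positivity)] at this
  exact this

theorem lmin_le_lmin_of_re_inner_eq [FiniteDimensional ℂ E] {S : Submodule ℂ E} [Nontrivial S]
    (A : E →ₗ[ℂ] E) (B : S →ₗ[ℂ] S) (h : ∀ ψ : S, (⟪ψ, B ψ⟫_ℂ).re = (⟪(ψ : E), A ψ⟫_ℂ).re) :
    lmin A ≤ lmin B :=
  le_lmin B fun ψ hψ => (h ψ).symm ▸ lmin_le_re_inner A hψ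

noncomputable def compression (S : Submodule ℂ E) [S.HasOrthogonalProjection]
    (A : E →ₗ[ℂ] E) : S →ₗ[ℂ] S :=
  S.orthogonalProjectionOnto.toLinearMap ∘ₗ A ∘ₗ S.subtype

section Compression

variable {S : Submodule ℂ E} [FiniteDimensional ℂ E]

theorem inner_compression_apply (A : E →ₗ[ℂ] E) (ψ : S) :
    ⟪ψ, compression S A ψ⟫_ℂ = ⟪(ψ : E), A ψ⟫_ℂ :=
  Submodule.inner_orthogonalProjectionOnto_eq_of_mem_left ψ (A ψ)

theorem lmin_compression_mul_norm_sq_le (A : E →ₗ[ℂ] E) {α : E} (hα : α ∈ S) :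
    lmin (compression S A) * ‖α‖ ^ 2 ≤ (⟪α, A α⟫_ℂ).re := by
  have h := lmin_mul_norm_sq_le (compression S A) ⟨α, hα⟩
  rwa [inner_compression_apply] at h

theorem lmin_compression_le_opNorm [Nontrivial S] (A : E →L[ℂ] E) :
    lmin (compression S A) ≤ ‖A‖ := by
  obtain ⟨u, hu⟩ := exists_norm_eq S zero_le_one
  calc lmin (compression S A) ≤ (⟪u, compression S A u⟫_ℂ).re := lmin_le_re_inner _ hu
    _ = (⟪(u : E), A u⟫_ℂ).re := by rw [inner_compression_apply]; rfl
    _ ≤ ‖A‖ * ‖u‖ * ‖u‖ := (le_abs_self _).trans (abs_re_inner_apply_le A u u)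
    _ = ‖A‖ := by rw [hu, mul_one, mul_one]

theorem lmin_add_le_lmin_compression [Nontrivial S] (A B : E →ₗ[ℂ] E)
    (hB : ∀ ψ ∈ S, B ψ = 0) : lmin (A + B) ≤ lmin (compression S A) :=
  lmin_le_lmin_of_re_inner_eq _ _ fun ψ => by
    rw [inner_compression_apply, LinearMap.add_apply, hB ψ ψ.2, add_zero]

end Compression

theorem sub_sq_div_le_of_sq_add_sq_eq_one {l K J a b : ℝ} (hl : l ≤ K) (hK : 0 ≤ K)
    (hJ : 2 * K < J) (hb : 0 ≤ b) (hab : a ^ 2 + b ^ 2 = 1) :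
    l - K ^ 2 / (J - 2 * K) ≤ l * a ^ 2 - 2 * K * a * b - K * b ^ 2 + J * b ^ 2 := by
  have hgap : 0 < J - 2 * K := by linarith
  have ha : a ≤ 1 := by nlinarith
  have hquad : -(K ^ 2 / (J - 2 * K)) ≤ (J - 2 * K) * b ^ 2 - 2 * K * b := by
    have : (J - 2 * K) * b ^ 2 - 2 * K * b + K ^ 2 / (J - 2 * K)
        = ((J - 2 * K) * b - K) ^ 2 / (J - 2 * K) := by field_simp; ring
    linarith [div_nonneg (sq_nonneg ((J - 2 * K) * b - K)) hgap.le]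
  nlinarith [mul_le_mul_of_nonneg_right hl (sq_nonneg b),
    mul_nonneg (mul_nonneg hK hb) (sub_nonneg.mpr ha)]

theorem mul_norm_sq_le_re_inner_of_gap {S : Submodule ℂ E} (B : E →ₗ[ℂ] E)
    (hB : B.IsSymmetric) (hker : ∀ ψ ∈ S, B ψ = 0) {J : ℝ}
    (hgap : ∀ ψ ∈ Sᗮ, J * ‖ψ‖ ^ 2 ≤ (⟪ψ, B ψ⟫_ℂ).re)
    {α β : E} (hα : α ∈ S) (hβ : β ∈ Sᗮ) : J * ‖β‖ ^ 2 ≤ (⟪α + β, B (α + β)⟫_ℂ).re := by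
  have hαβ : ⟪α, B β⟫_ℂ = 0 := by rw [← hB, hker α hα, inner_zero_left]
  rw [map_add, hker α hα, zero_add, inner_add_left, hαβ, zero_add]
  exact hgap β hβ

section Decomposition

variable [FiniteDimensional ℂ E] {S : Submodule ℂ E}

theorem lmin_compression_mul_sub_le_re_inner (A : E →L[ℂ] E) {α : E} (hα : α ∈ S) (β : E) :
    lmin (compression S A) * ‖α‖ ^ 2 - 2 * ‖A‖ * ‖α‖ * ‖β‖ - ‖A‖ * ‖β‖ ^ 2
      ≤ (⟪α + β, A (α + β)⟫_ℂ).re := by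
  have hαα : lmin (compression S A) * ‖α‖ ^ 2 ≤ (⟪α, A α⟫_ℂ).re :=
    lmin_compression_mul_norm_sq_le _ hα
  have hαβ := neg_le_of_abs_le (abs_re_inner_apply_le A α β)
  have hβα : -(‖A‖ * ‖α‖ * ‖β‖) ≤ (⟪β, A α⟫_ℂ).re := by
    simpa only [mul_right_comm] using neg_le_of_abs_le (abs_re_inner_apply_le A β α)
  have hββ : -(‖A‖ * ‖β‖ ^ 2) ≤ (⟪β, A β⟫_ℂ).re := by
    simpa only [mul_assoc, sq] using neg_le_of_abs_le (abs_re_inner_apply_le A β β)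
  simp only [map_add, inner_add_left, inner_add_right, Complex.add_re]
  linarith

theorem lmin_compression_sub_le_lmin_add [Nontrivial S] (A B : E →L[ℂ] E)
    (hB : (B : E →ₗ[ℂ] E).IsSymmetric) (hker : ∀ ψ ∈ S, B ψ = 0) {J : ℝ} (hJ : 2 * ‖A‖ < J)
    (hgap : ∀ ψ ∈ Sᗮ, J * ‖ψ‖ ^ 2 ≤ (⟪ψ, B ψ⟫_ℂ).re) :
    lmin (compression S A) - ‖A‖ ^ 2 / (J - 2 * ‖A‖)
      ≤ lmin ((A + B : E →L[ℂ] E) : E →ₗ[ℂ] E) := by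
  have : Nontrivial E := Subtype.coe_injective.nontrivial (α := S)
  refine le_lmin _ fun ψ hψ => ?_
  set α := S.starProjection ψ
  set β := ψ - α
  have hα : α ∈ S := S.starProjection_apply_mem ψ
  have hβ : β ∈ Sᗮ := Submodule.sub_starProjection_mem_orthogonal ψ
  have hψ' : ψ = α + β := (add_sub_cancel α ψ).symm
  have hpyth : ‖α‖ ^ 2 + ‖β‖ ^ 2 = 1 := by
    have h := norm_add_sq_eq_norm_sq_add_norm_sq_of_inner_eq_zero α β
      (Submodule.inner_right_of_mem_orthogonal hα hβ)
    rw [← hψ', hψ] at h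
    linear_combination -h
  have hAβ := lmin_compression_mul_sub_le_re_inner A hα β
  have hBβ : J * ‖β‖ ^ 2 ≤ (⟪α + β, B (α + β)⟫_ℂ).re :=
    mul_norm_sq_le_re_inner_of_gap _ hB hker hgap hα hβ
  have hscalar := sub_sq_div_le_of_sq_add_sq_eq_one (lmin_compression_le_opNorm (S := S) A)
    (norm_nonneg A) hJ (norm_nonneg β) hpyth
  rw [hψ']
  change _ ≤ (⟪α + β, A (α + β) + B (α + β)⟫_ℂ).re
  rw [inner_add_right, Complex.add_re]
  linarith

end Decomposition

end ProjectionLemma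

theorem stmt_10_general {𝓗 : Type*} [NormedAddCommGroup 𝓗] [InnerProductSpace ℂ 𝓗]
    [FiniteDimensional ℂ 𝓗]
    (S : Submodule ℂ 𝓗) (hS : S ≠ ⊥)
    (H₁ H₂ : 𝓗 →L[ℂ] 𝓗)
    (hH₂ : ∀ x y : 𝓗, (@inner ℂ 𝓗 _ (H₂ x) y) = @inner ℂ 𝓗 _ x (H₂ y))
    (hker : ∀ ψ ∈ S, H₂ ψ = 0)
    (J : ℝ) (hJ : 2 * ‖H₁‖ < J)
    (hgap : ∀ ψ ∈ Sᗮ, J * ‖ψ‖ ^ 2 ≤ (@inner ℂ 𝓗 _ ψ (H₂ ψ)).re) :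
    let H₁S : S →ₗ[ℂ] S :=
      (S.orthogonalProjection).toLinearMap ∘ₗ (H₁ : 𝓗 →ₗ[ℂ] 𝓗) ∘ₗ S.subtype
    lmin H₁S - ‖H₁‖ ^ 2 / (J - 2 * ‖H₁‖) ≤ lmin ((H₁ + H₂ : 𝓗 →L[ℂ] 𝓗) : 𝓗 →ₗ[ℂ] 𝓗) ∧
    lmin ((H₁ + H₂ : 𝓗 →L[ℂ] 𝓗) : 𝓗 →ₗ[ℂ] 𝓗) ≤ lmin H₁S := by
  have : Nontrivial S := Submodule.nontrivial_iff_ne_bot.mpr hS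
  exact ⟨lmin_compression_sub_le_lmin_add H₁ H₂ hH₂ hker hJ hgap,
    lmin_add_le_lmin_compression (H₁ : 𝓗 →ₗ[ℂ] 𝓗) H₂ hker⟩

/-- The Projection Lemma of Kempe–Kitaev–Regev. -/
theorem stmt_10 {𝓗 : Type*} [NormedAddCommGroup 𝓗] [InnerProductSpace ℂ 𝓗]
    [FiniteDimensional ℂ 𝓗] [Nontrivial 𝓗]
    (S : Submodule ℂ 𝓗) (hS : S ≠ ⊥)
    (H₁ H₂ : 𝓗 →L[ℂ] 𝓗)
    (hH₁ : ∀ x y : 𝓗, (@inner ℂ 𝓗 _ (H₁ x) y) = @inner ℂ 𝓗 _ x (H₁ y))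
    (hH₂ : ∀ x y : 𝓗, (@inner ℂ 𝓗 _ (H₂ x) y) = @inner ℂ 𝓗 _ x (H₂ y))
    (hker : ∀ ψ ∈ S, H₂ ψ = 0)
    (J : ℝ) (hJ : 2 * ‖H₁‖ < J)
    (hgap : ∀ ψ ∈ Sᗮ, J * ‖ψ‖ ^ 2 ≤ (@inner ℂ 𝓗 _ ψ (H₂ ψ)).re) :
    let H₁S : S →ₗ[ℂ] S :=
      (S.orthogonalProjection).toLinearMap ∘ₗ (H₁ : 𝓗 →ₗ[ℂ] 𝓗) ∘ₗ S.subtype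
    lmin H₁S - ‖H₁‖ ^ 2 / (J - 2 * ‖H₁‖) ≤ lmin ((H₁ + H₂ : 𝓗 →L[ℂ] 𝓗) : 𝓗 →ₗ[ℂ] 𝓗) ∧
    lmin ((H₁ + H₂ : 𝓗 →L[ℂ] 𝓗) : 𝓗 →ₗ[ℂ] 𝓗) ≤ lmin H₁S :=
  stmt_10_general S hS H₁ H₂ hH₂ hker J hJ hgap
end

section
/- Let T ≥ 1 be an integer and let H_clock be the real diagonal matrix indexed by bit strings x : {0,…,T} → {0,1}, whose diagonal entry at x is λ(x) := 4T·|{(i,j) : i < j, x_i = 1 = x_j}| + |{t : x_t = 0}| − T·|{t : x_t = 1}|. Then: (i) λ(x) ≥ 0 for all x, so H_clock is positive semidefinite; (ii) λ(x) = 0 if and only if x has Hamming weight exactly 1; and (iii) λ(x) ≥ T whenever the Hamming weight of x is not 1. Consequently the kernel of H_clock is spanned by the T+1 one-hot basis vectors |0^t 1 0^{T−t}⟩, t ∈ {0,…,T}, and the smallest nonzero eigenvalue of H_clock is at least T. -/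
/-!
The diagonal entry `λ(x)` depends only on the Hamming weight `k` of `x`: there are `k.choose 2`
pairs of ones and `T + 1 - k` zeros, so
`λ = 2Tk(k - 1) + (T + 1 - k) - Tk = (k - 1)(T(2k - 1) - 1)`.
This vanishes exactly at `k = 1`, equals `T + 1` at `k = 0`, and is at least `3T - 1 ≥ T` for
`k ≥ 2`. The kernel of a diagonal matrix is spanned by the basis vectors at its zero entries.
-/

open Finset

theorem card_filter_lt_and_and {ι : Type*} [Fintype ι] [LinearOrder ι] (q : ι → Prop)
    [DecidablePred q] :
    #{p : ι × ι | p.1 < p.2 ∧ q p.1 ∧ q p.2} = (#{i | q i}).choose 2 := by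
  rw [← card_product_filter_lt]
  congr 1
  ext p
  simp only [mem_filter, mem_univ, mem_product, true_and]
  tauto

theorem card_filter_eq_false_add_card_filter_eq_true {ι : Type*} [Fintype ι] (x : ι → Bool) :
    #{i | x i = false} + #{i | x i = true} = Fintype.card ι := by
  simpa [add_comm] using card_filter_add_card_filter_not (s := univ) (fun i => x i = true)

theorem Matrix.ker_mulVecLin_diagonal {ι K : Type*} [Fintype ι] [DecidableEq ι] [Semifield K]
    (d : ι → K) :
    LinearMap.ker (Matrix.diagonal d).mulVecLin
      = Submodule.span K {v : ι → K | ∃ i, d i = 0 ∧ v = Pi.single i 1} := by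
  have hset : {v : ι → K | ∃ i, d i = 0 ∧ v = Pi.single i 1}
      = ⋃ i ∈ {i | d i = 0}, {Pi.single i 1} := by
    ext v
    simp
  rw [← Matrix.toLin'_apply', Matrix.ker_diagonal_toLin', hset, Submodule.span_iUnion₂]
  congr! with i
  ext v
  simp [Submodule.mem_span_singleton, ← Pi.single_smul']

/-- The diagonal entry `λ(x)` of `H_clock` at a string `x` of Hamming weight `k`. -/
def clockEnergy (T k : ℕ) : ℝ := 4 * T * k.choose 2 + (T + 1 - k) - T * k

theorem clockEnergy_eq_mul (T k : ℕ) :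
    clockEnergy T k = (k - 1) * (T * (2 * k - 1) - 1) := by
  rw [clockEnergy, Nat.cast_choose_two]
  ring

theorem clockEnergy_one (T : ℕ) : clockEnergy T 1 = 0 := by
  simp [clockEnergy_eq_mul]

theorem le_clockEnergy {T k : ℕ} (hT : 1 ≤ T) (hk : k ≠ 1) : (T : ℝ) ≤ clockEnergy T k := by
  rw [clockEnergy_eq_mul]
  obtain rfl | hk2 : k = 0 ∨ 2 ≤ k := by omega
  · simp
  · have hT' : (1 : ℝ) ≤ T := by exact_mod_cast hT
    have hk2' : (2 : ℝ) ≤ k := by exact_mod_cast hk2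
    calc (T : ℝ) = 1 * T := (one_mul _).symm
      _ ≤ (k - 1) * (T * (2 * k - 1) - 1) := by gcongr <;> nlinarith

theorem clockEnergy_eq_zero_iff {T k : ℕ} (hT : 1 ≤ T) : clockEnergy T k = 0 ↔ k = 1 := by
  refine ⟨fun h => ?_, fun h => h ▸ clockEnergy_one T⟩
  by_contra hk
  have := le_clockEnergy hT hk
  have : (1 : ℝ) ≤ T := by exact_mod_cast hT
  linarith

theorem clockEnergy_nonneg {T : ℕ} (hT : 1 ≤ T) (k : ℕ) : 0 ≤ clockEnergy T k := by
  by_cases hk : k = 1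
  · rw [hk, clockEnergy_one]
  · exact (Nat.cast_nonneg T).trans (le_clockEnergy hT hk)

/-- Properties of the one-hot clock Hamiltonian `H_clock`. -/
theorem stmt_11 (T : ℕ) (hT : 1 ≤ T) :
    -- the diagonal entry of `H_clock` at basis state `x`
    let lam : (Fin (T + 1) → Bool) → ℝ := fun x =>
      4 * T * ((Finset.univ.filter
          (fun p : Fin (T + 1) × Fin (T + 1) => p.1 < p.2 ∧ x p.1 = true ∧ x p.2 = true)).card : ℝ)
        + ((Finset.univ.filter (fun t => x t = false)).card : ℝ)
        - T * ((Finset.univ.filter (fun t => x t = true)).card : ℝ)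
    -- (i) positivity
    (∀ x, 0 ≤ lam x) ∧
    -- (ii) zero exactly on Hamming-weight-one strings
    (∀ x, lam x = 0 ↔ (Finset.univ.filter (fun t => x t = true)).card = 1) ∧
    -- (iii) spectral gap at least T
    (∀ x, (Finset.univ.filter (fun t => x t = true)).card ≠ 1 → (T : ℝ) ≤ lam x) ∧
    -- consequently, the kernel is spanned by the one-hot basis vectors
    LinearMap.ker (Matrix.diagonal lam).mulVecLin
      = Submodule.span ℝ {v : (Fin (T + 1) → Bool) → ℝ |
          ∃ x : Fin (T + 1) → Bool,
            (Finset.univ.filter (fun t => x t = true)).card = 1 ∧ v = Pi.single x 1} := by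
  intro lam
  have hlam : ∀ x, lam x = clockEnergy T #{t | x t = true} := by
    intro x
    have hzeros : (#{t | x t = false} + #{t | x t = true} : ℝ) = T + 1 := by
      exact_mod_cast (card_filter_eq_false_add_card_filter_eq_true x).trans (Fintype.card_fin _)
    simp only [lam, clockEnergy, card_filter_lt_and_and (fun t => x t = true)]
    linarith
  have hzero : ∀ x, lam x = 0 ↔ #{t | x t = true} = 1 := fun x => by
    rw [hlam, clockEnergy_eq_zero_iff hT]
  refine ⟨fun x => hlam x ▸ clockEnergy_nonneg hT _, hzero,
    fun x hx => hlam x ▸ le_clockEnergy hT hx, ?_⟩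
  rw [Matrix.ker_mulVecLin_diagonal]
  simp_rw [hzero]
end

section
/- Let ψ_0, ψ_1 ∈ ℂ² be orthonormal. Define the operator H_split on ℂ²_A ⊗ (ℂ²)^{⊗3} (clock qubits C_0, C_1, C_2) by H_split = |ψ_1⟩⟨ψ_1|_A ⊗ |1⟩⟨1|_{C_1} + |ψ_0⟩⟨ψ_0|_A ⊗ |1⟩⟨1|_{C_2} + I_A ⊗ [ |1⟩⟨1|_{C_0} − |10⟩⟨01|_{C_0C_1} − |10⟩⟨01|_{C_0C_2} + |1⟩⟨1|_{C_1} − |10⟩⟨01|_{C_1C_0} + |10⟩⟨01|_{C_1C_2} + |1⟩⟨1|_{C_2} − |10⟩⟨01|_{C_2C_0} + |10⟩⟨01|_{C_2C_1} ]. Let S_clock ⊆ (ℂ²)^{⊗3} be the span of |100⟩, |010⟩, |001⟩, and Π := I_A ⊗ P_{S_clock} with P_{S_clock} the orthogonal projector onto S_clock. Then: H_split is Hermitian; Π H_split Π is positive semidefinite; the kernel of Π H_split Π intersected with ℂ² ⊗ S_clock equals the span of φ_0 := (1/√2)·ψ_0 ⊗ (|100⟩ + |010⟩) and φ_1 :=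 (1/√2)·ψ_1 ⊗ (|100⟩ + |001⟩); and moreover H_split φ_0 = H_split φ_1 = 0. -/
/-!
On the span S of the one-excitation clock states e₀, e₁, e₂, the clock part of `H_split`
compresses to |w⟩⟨w| with w = e₀ - e₁ - e₂, and |1⟩⟨1|_{Cᵢ} compresses to |eᵢ⟩⟨eᵢ|.
Writing I_A = |ψ₀⟩⟨ψ₀| + |ψ₁⟩⟨ψ₁|, the compression Π H Π is therefore the sum of the four
rank-one projections onto ψ₁ ⊗ e₁, ψ₀ ⊗ e₂, ψ₀ ⊗ w and ψ₁ ⊗ w. So it is positive semidefinite,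
and a vector of ℂ² ⊗ S lies in its kernel iff it is orthogonal to these four vectors; in the
basis ψₐ ⊗ eₜ this cuts out exactly the span of ψ₀ ⊗ (e₀ + e₁) and ψ₁ ⊗ (e₀ + e₂).
-/

open Matrix Kronecker ComplexOrder

/-- The projector `|1⟩⟨1|` on a single (Bool-indexed) qubit. -/
def P1 : Matrix Bool Bool ℂ :=
  Matrix.of fun b c => if b = true ∧ c = true then 1 else 0

/-- The rank-one operator `|v⟩⟨w|` on two qubits, for computational basis states `v, w`. -/
def ketbra2 (v w : Bool × Bool) : Matrix (Bool × Bool) (Bool × Bool) ℂ :=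
  Matrix.of fun u u' => if u = v ∧ u' = w then 1 else 0

/-- A single-qubit operator `M` acting on clock qubit `i` (identity on the other
clock qubits). -/
def clock1 (m : ℕ) (i : Fin m) (M : Matrix Bool Bool ℂ) :
    Matrix (Fin m → Bool) (Fin m → Bool) ℂ :=
  Matrix.of fun c c' => M (c i) (c' i) * (if ∀ t, t ≠ i → c t = c' t then 1 else 0)

/-- A two-qubit operator `M` acting on the (ordered) pair of clock qubits `i, j`
(identity on the other clock qubits). -/
def clock2 (m : ℕ) (i j : Fin m) (M : Matrix (Bool × Bool) (Bool × Bool) ℂ) :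
    Matrix (Fin m → Bool) (Fin m → Bool) ℂ :=
  Matrix.of fun c c' => M (c i, c j) (c' i, c' j) *
    (if ∀ t, t ≠ i → t ≠ j → c t = c' t then 1 else 0)

/-- `|10⟩⟨01|`. -/
def K10 : Matrix (Bool × Bool) (Bool × Bool) ℂ := ketbra2 (true, false) (false, true)

/-- The split gadget `H_split`, with computational operators `Pψ0 = |ψ₀⟩⟨ψ₀|`,
`Pψ1 = |ψ₁⟩⟨ψ₁|` on register `α`, acting on the clock qubits `a, b, c` among `m`
clock qubits. -/
noncomputable def HsplitOn {α : Type} [Fintype α] [DecidableEq α] (m : ℕ)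
    (Pψ0 Pψ1 : Matrix α α ℂ) (a b c : Fin m) :
    Matrix (α × (Fin m → Bool)) (α × (Fin m → Bool)) ℂ :=
  Pψ1 ⊗ₖ clock1 m b P1 + Pψ0 ⊗ₖ clock1 m c P1 +
  (1 : Matrix α α ℂ) ⊗ₖ
    (clock1 m a P1 - clock2 m a b K10 - clock2 m a c K10
      + clock1 m b P1 - clock2 m b a K10 + clock2 m b c K10
      + clock1 m c P1 - clock2 m c a K10 + clock2 m c b K10)

/-- The one-hot clock basis state `|0^t 1 0^{m-1-t}⟩`. -/
def oneHot (m : ℕ) (t : Fin m) : Fin m → Bool := fun s => decide (s = t)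

/-- The orthogonal projector onto the span of the one-hot clock states. -/
noncomputable def clockProj (m : ℕ) : Matrix (Fin m → Bool) (Fin m → Bool) ℂ :=
  ∑ t : Fin m, Matrix.of fun c c' =>
    (if c = oneHot m t then 1 else 0) * (if c' = oneHot m t then 1 else 0)

section KronVec

variable {R : Type*} {n m : Type*}

def kronVec [Mul R] (f : n → R) (g : m → R) : n × m → R := fun r => f r.1 * g r.2

@[simp]
lemma kronVec_apply [Mul R] (f : n → R) (g : m → R) (r : n × m) :
    kronVec f g r = f r.1 * g r.2 := rfl

lemma kronVec_add_right [Distrib R] (f : n → R) (g h : m → R) :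
    kronVec f (g + h) = kronVec f g + kronVec f h := by
  funext r; simp [mul_add]

lemma kronVec_sub_right [NonUnitalNonAssocRing R] (f : n → R) (g h : m → R) :
    kronVec f (g - h) = kronVec f g - kronVec f h := by
  funext r; simp [mul_sub]

@[simp]
lemma kronVec_zero_left [MulZeroClass R] (g : m → R) : kronVec (0 : n → R) g = 0 := by
  funext r; simp

@[simp]
lemma kronVec_zero_right [MulZeroClass R] (f : n → R) : kronVec f (0 : m → R) = 0 := by
  funext r; simp

lemma star_kronVec [CommMonoid R] [StarMul R] (f : n → R) (g : m → R) :
    star (kronVec f g) = kronVec (star f) (star g) := by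
  funext r; simp

variable [CommSemiring R]

lemma kronecker_mulVec_kronVec [Fintype n] [Fintype m] (A : Matrix n n R) (B : Matrix m m R)
    (f : n → R) (g : m → R) :
    (A ⊗ₖ B) *ᵥ kronVec f g = kronVec (A *ᵥ f) (B *ᵥ g) := by
  funext ⟨i, c⟩
  simp only [mulVec, dotProduct, kronVec_apply, Fintype.sum_prod_type, kroneckerMap_apply,
    Finset.sum_mul_sum]
  exact Finset.sum_congr rfl fun j _ => Finset.sum_congr rfl fun d _ => by ring

lemma vecMulVec_kronecker_vecMulVec (a b : n → R) (u v : m → R) :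
    vecMulVec a b ⊗ₖ vecMulVec u v = vecMulVec (kronVec a u) (kronVec b v) := by
  ext ⟨i, c⟩ ⟨j, d⟩
  simp only [kroneckerMap_apply, vecMulVec_apply, kronVec_apply]
  ring

end KronVec

lemma sum_vecMulVec_star_eq_one_of_orthonormal {R n : Type*} [CommRing R] [StarRing R] [Fintype n]
    [DecidableEq n] (ψ : n → n → R) (hψ : ∀ k l, star (ψ k) ⬝ᵥ ψ l = (1 : Matrix n n R) k l) :
    ∑ k, vecMulVec (ψ k) (star (ψ k)) = 1 := by
  let U : Matrix n n R := of fun k i => star (ψ k i)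
  have hU : U * Uᴴ = 1 := by
    ext k l
    simpa [U, mul_apply, dotProduct] using hψ k l
  rw [← mul_eq_one_comm.mp hU]
  ext i j
  simp [U, mul_apply, Matrix.sum_apply, vecMulVec_apply]

lemma dotProduct_eq_zero_of_sum_vecMulVec_mulVec_eq_zero {𝕜 ι n : Type*} [RCLike 𝕜]
    [Fintype ι] [Fintype n] (g : ι → n → 𝕜) {x : n → 𝕜}
    (hx : (∑ k, vecMulVec (g k) (star (g k))) *ᵥ x = 0) (k : ι) : star (g k) ⬝ᵥ x = 0 := by
  have hsum : ∑ k, (star (g k) ⬝ᵥ x) * star (star (g k) ⬝ᵥ x) = 0 := by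
    have := congrArg (star x ⬝ᵥ ·) hx
    simp only [sum_mulVec, vecMulVec_mulVec, op_smul_eq_smul, dotProduct_sum, dotProduct_smul,
      smul_eq_mul, dotProduct_zero] at this
    simpa only [← star_dotProduct] using this
  have hk := (Finset.sum_eq_zero_iff_of_nonneg (fun k _ => mul_star_self_nonneg _)).mp hsum k
    (Finset.mem_univ k)
  simpa using hk

lemma span_pair_smul_of_isUnit {R M : Type*} [Semiring R] [AddCommMonoid M] [Module R M]
    {c : R} (hc : IsUnit c) (u v : M) :
    Submodule.span R {c • u, c • v} = Submodule.span R {u, v} := by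
  rw [Submodule.span_insert, Submodule.span_insert, Submodule.span_singleton_smul_eq hc,
    Submodule.span_singleton_smul_eq hc]

lemma map_vecMulVec {R S m n : Type*} [NonAssocSemiring R] [NonAssocSemiring S]
    (f : R →+* S) (u : m → R) (v : n → R) : (vecMulVec u v).map f = vecMulVec (f ∘ u) (f ∘ v) := by
  ext i j; simp [vecMulVec_apply]

lemma map_mulVec_comp {R S m n : Type*} [Fintype n] [NonAssocSemiring R] [NonAssocSemiring S]
    (f : R →+* S) (M : Matrix m n R) (v : n → R) : M.map f *ᵥ (f ∘ v) = f ∘ (M *ᵥ v) :=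
  funext fun i => (f.map_mulVec M v i).symm

section Clock

variable {m : ℕ}

def clockKet (R : Type*) [Zero R] [One R] (m : ℕ) (t : Fin m) : (Fin m → Bool) → R :=
  fun c => if c = oneHot m t then 1 else 0

lemma oneHot_injective : Function.Injective (oneHot m) := fun s t h => by
  simpa [oneHot] using congrFun h s

lemma clockKet_dotProduct_clockKet {R : Type*} [NonAssocSemiring R] (s t : Fin m) :
    clockKet R m s ⬝ᵥ clockKet R m t = if s = t then 1 else 0 := by
  simp [clockKet, dotProduct, oneHot_injective.eq_iff, eq_comm]

@[simp]
lemma star_clockKet {R : Type*} [NonAssocSemiring R] [StarRing R] (t : Fin m) :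
    star (clockKet R m t) = clockKet R m t := by
  funext c; simp [clockKet, apply_ite star]

lemma map_comp_clockKet {R S : Type*} [NonAssocSemiring R] [NonAssocSemiring S] (f : R →+* S)
    (t : Fin m) : f ∘ clockKet R m t = clockKet S m t := by
  funext c; simp [clockKet, apply_ite f]

lemma clockProj_eq_sum :
    clockProj m = ∑ t, vecMulVec (clockKet ℂ m t) (clockKet ℂ m t) := rfl

lemma clockProj_mulVec_clockKet (t : Fin m) :
    clockProj m *ᵥ clockKet ℂ m t = clockKet ℂ m t := by
  simp [clockProj_eq_sum, sum_mulVec, vecMulVec_mulVec, clockKet_dotProduct_clockKet]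

lemma clockProj_mul_self : clockProj m * clockProj m = clockProj m := by
  nth_rw 2 [clockProj_eq_sum]
  simp only [Finset.mul_sum, mul_vecMulVec, clockProj_mulVec_clockKet]
  exact clockProj_eq_sum.symm

lemma clock1_P1_mulVec_clockKet_of_ne {i t : Fin m} (h : t ≠ i) :
    clock1 m i P1 *ᵥ clockKet ℂ m t = 0 := by
  funext c
  simp [mulVec, dotProduct, clockKet, clock1, P1, oneHot, Ne.symm h]

lemma P1_isHermitian : P1.IsHermitian := by
  ext b c; by_cases b = true ∧ c = true <;> simp_all [P1, and_comm]

lemma conjTranspose_clock1 (i : Fin m) (M : Matrix Bool Bool ℂ) :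
    (clock1 m i M)ᴴ = clock1 m i Mᴴ := by
  ext c c'
  simp [clock1, conjTranspose_apply, apply_ite star, eq_comm]

lemma conjTranspose_clock2_K10 (i j : Fin m) : (clock2 m i j K10)ᴴ = clock2 m j i K10 := by
  ext c c'
  simp only [clock2, K10, ketbra2, conjTranspose_apply, of_apply, star_mul', apply_ite star,
    star_one, star_zero, Prod.mk.injEq]
  congr 2 <;> apply propext
  · tauto
  · exact ⟨fun h t hj hi => (h t hi hj).symm, fun h t hi hj => (h t hj hi).symm⟩

lemma one_kronecker_clockProj_mulVec {α ι : Type*} [Fintype α] [DecidableEq α] [Fintype ι]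
    (ψ : ι → α → ℂ) (hψ : ∑ k, vecMulVec (ψ k) (star (ψ k)) = 1)
    (x : α × (Fin m → Bool) → ℂ) :
    ((1 : Matrix α α ℂ) ⊗ₖ clockProj m) *ᵥ x =
      ∑ k, ∑ t, (star (kronVec (ψ k) (clockKet ℂ m t)) ⬝ᵥ x) • kronVec (ψ k) (clockKet ℂ m t) := by
  have hsum : (1 : Matrix α α ℂ) ⊗ₖ clockProj m = ∑ k, ∑ t,
      vecMulVec (kronVec (ψ k) (clockKet ℂ m t)) (star (kronVec (ψ k) (clockKet ℂ m t))) := by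
    simp only [← hψ, clockProj_eq_sum, star_kronVec, star_clockKet,
      ← vecMulVec_kronecker_vecMulVec]
    ext
    simp [kroneckerMap_apply, Matrix.sum_apply, Finset.sum_mul_sum]
  simp [hsum, sum_mulVec, vecMulVec_mulVec]

end Clock

section Gadget

variable {α : Type} [Fintype α] [DecidableEq α] {m : ℕ}

def splitClock (m : ℕ) (a b c : Fin m) : Matrix (Fin m → Bool) (Fin m → Bool) ℂ :=
  clock1 m a P1 - clock2 m a b K10 - clock2 m a c K10
    + clock1 m b P1 - clock2 m b a K10 + clock2 m b c K10
    + clock1 m c P1 - clock2 m c a K10 + clock2 m c b K10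

lemma HsplitOn_eq (Pψ0 Pψ1 : Matrix α α ℂ) (a b c : Fin m) :
    HsplitOn m Pψ0 Pψ1 a b c =
      Pψ1 ⊗ₖ clock1 m b P1 + Pψ0 ⊗ₖ clock1 m c P1 + 1 ⊗ₖ splitClock m a b c := rfl

lemma splitClock_isHermitian (a b c : Fin m) : (splitClock m a b c).IsHermitian := by
  simp only [IsHermitian, splitClock, conjTranspose_add, conjTranspose_sub, conjTranspose_clock1,
    conjTranspose_clock2_K10, P1_isHermitian.eq]
  abel

lemma HsplitOn_isHermitian {Pψ0 Pψ1 : Matrix α α ℂ} (h0 : Pψ0.IsHermitian)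
    (h1 : Pψ1.IsHermitian) (a b c : Fin m) : (HsplitOn m Pψ0 Pψ1 a b c).IsHermitian := by
  simp only [IsHermitian, HsplitOn_eq, conjTranspose_add, conjTranspose_kronecker, h0.eq, h1.eq,
    conjTranspose_clock1, P1_isHermitian.eq, conjTranspose_one, (splitClock_isHermitian a b c).eq]

end Gadget

-- The clock operators have entries in {0, ±1}: the products of these 8 × 8 matrices are
-- computed over ℤ by `decide` and transported to ℂ along `Int.castRingHom`.
section IntegerClock

variable {m : ℕ}

def clock1P1Int (m : ℕ) (i : Fin m) : Matrix (Fin m → Bool) (Fin m → Bool) ℤ :=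
  of fun c c' => if c i = true ∧ c' i = true ∧ ∀ t, t ≠ i → c t = c' t then 1 else 0

def clock2K10Int (m : ℕ) (i j : Fin m) : Matrix (Fin m → Bool) (Fin m → Bool) ℤ :=
  of fun c c' => if (c i, c j) = (true, false) ∧ (c' i, c' j) = (false, true) ∧
    ∀ t, t ≠ i → t ≠ j → c t = c' t then 1 else 0

def splitClockInt (m : ℕ) (a b c : Fin m) : Matrix (Fin m → Bool) (Fin m → Bool) ℤ :=
  clock1P1Int m a - clock2K10Int m a b - clock2K10Int m a c
    + clock1P1Int m b - clock2K10Int m b a + clock2K10Int m b c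
    + clock1P1Int m c - clock2K10Int m c a + clock2K10Int m c b

def clockProjInt (m : ℕ) : Matrix (Fin m → Bool) (Fin m → Bool) ℤ :=
  ∑ t, vecMulVec (clockKet ℤ m t) (clockKet ℤ m t)

lemma clockProjInt_mul_clock1P1Int_mul_clockProjInt :
    ∀ i : Fin 3, clockProjInt 3 * clock1P1Int 3 i * clockProjInt 3 =
      vecMulVec (clockKet ℤ 3 i) (clockKet ℤ 3 i) := by
  decide

lemma clockProjInt_mul_splitClockInt_mul_clockProjInt :
    clockProjInt 3 * splitClockInt 3 0 1 2 * clockProjInt 3 =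
      vecMulVec (clockKet ℤ 3 0 - clockKet ℤ 3 1 - clockKet ℤ 3 2)
        (clockKet ℤ 3 0 - clockKet ℤ 3 1 - clockKet ℤ 3 2) := by
  decide

lemma splitClockInt_mulVec_clockKet_add_clockKet :
    splitClockInt 3 0 1 2 *ᵥ (clockKet ℤ 3 0 + clockKet ℤ 3 1) = 0 ∧
      splitClockInt 3 0 1 2 *ᵥ (clockKet ℤ 3 0 + clockKet ℤ 3 2) = 0 := by
  decide

lemma clock1_P1_eq_map (i : Fin m) :
    clock1 m i P1 = (Int.castRingHom ℂ).mapMatrix (clock1P1Int m i) := by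
  ext c c'
  simp only [clock1, clock1P1Int, P1, RingHom.mapMatrix_apply, map_apply, of_apply]
  split_ifs <;> simp_all

lemma clock2_K10_eq_map (i j : Fin m) :
    clock2 m i j K10 = (Int.castRingHom ℂ).mapMatrix (clock2K10Int m i j) := by
  ext c c'
  simp only [clock2, clock2K10Int, K10, ketbra2, RingHom.mapMatrix_apply, map_apply, of_apply]
  split_ifs <;> simp_all

lemma splitClock_eq_map (a b c : Fin m) :
    splitClock m a b c = (Int.castRingHom ℂ).mapMatrix (splitClockInt m a b c) := by
  simp only [splitClock, splitClockInt, map_add, map_sub, clock1_P1_eq_map, clock2_K10_eq_map]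

lemma clockProj_eq_map : clockProj m = (Int.castRingHom ℂ).mapMatrix (clockProjInt m) := by
  simp only [clockProj_eq_sum, clockProjInt, map_sum, RingHom.mapMatrix_apply, map_vecMulVec,
    map_comp_clockKet]

lemma clockProj_mul_clock1_P1_mul_clockProj (i : Fin 3) :
    clockProj 3 * clock1 3 i P1 * clockProj 3 = vecMulVec (clockKet ℂ 3 i) (clockKet ℂ 3 i) := by
  rw [clockProj_eq_map, clock1_P1_eq_map, ← map_mul, ← map_mul,
    clockProjInt_mul_clock1P1Int_mul_clockProjInt, RingHom.mapMatrix_apply, map_vecMulVec,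
    map_comp_clockKet]

lemma clockProj_mul_splitClock_mul_clockProj :
    clockProj 3 * splitClock 3 0 1 2 * clockProj 3 =
      vecMulVec (clockKet ℂ 3 0 - clockKet ℂ 3 1 - clockKet ℂ 3 2)
        (clockKet ℂ 3 0 - clockKet ℂ 3 1 - clockKet ℂ 3 2) := by
  have hw : Int.castRingHom ℂ ∘ (clockKet ℤ 3 0 - clockKet ℤ 3 1 - clockKet ℤ 3 2) =
      clockKet ℂ 3 0 - clockKet ℂ 3 1 - clockKet ℂ 3 2 := by
    funext c; simp [← map_comp_clockKet (Int.castRingHom ℂ)]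
  rw [clockProj_eq_map, splitClock_eq_map, ← map_mul, ← map_mul,
    clockProjInt_mul_splitClockInt_mul_clockProjInt, RingHom.mapMatrix_apply, map_vecMulVec, hw]

lemma splitClock_mulVec_clockKet_add_clockKet :
    splitClock 3 0 1 2 *ᵥ (clockKet ℂ 3 0 + clockKet ℂ 3 1) = 0 ∧
      splitClock 3 0 1 2 *ᵥ (clockKet ℂ 3 0 + clockKet ℂ 3 2) = 0 := by
  have hcast (s t : Fin 3) : clockKet ℂ 3 s + clockKet ℂ 3 t =
      Int.castRingHom ℂ ∘ (clockKet ℤ 3 s + clockKet ℤ 3 t) := by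
    funext c; simp [← map_comp_clockKet (Int.castRingHom ℂ)]
  obtain ⟨h01, h02⟩ := splitClockInt_mulVec_clockKet_add_clockKet
  rw [hcast, hcast, splitClock_eq_map, RingHom.mapMatrix_apply, map_mulVec_comp, map_mulVec_comp,
    h01, h02]
  constructor <;> funext c <;> simp

end IntegerClock

section Compression

variable {α : Type} [Fintype α] [DecidableEq α] {ψ0 ψ1 : α → ℂ}

lemma compress_HsplitOn (Pψ0 Pψ1 : Matrix α α ℂ) :
    (1 ⊗ₖ clockProj 3) * HsplitOn 3 Pψ0 Pψ1 0 1 2 * (1 ⊗ₖ clockProj 3) =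
      Pψ1 ⊗ₖ vecMulVec (clockKet ℂ 3 1) (clockKet ℂ 3 1)
        + Pψ0 ⊗ₖ vecMulVec (clockKet ℂ 3 2) (clockKet ℂ 3 2)
        + 1 ⊗ₖ vecMulVec (clockKet ℂ 3 0 - clockKet ℂ 3 1 - clockKet ℂ 3 2)
            (clockKet ℂ 3 0 - clockKet ℂ 3 1 - clockKet ℂ 3 2) := by
  simp only [HsplitOn_eq, Matrix.mul_add, Matrix.add_mul, ← mul_kronecker_mul, Matrix.one_mul,
    Matrix.mul_one, clockProj_mul_clock1_P1_mul_clockProj, clockProj_mul_splitClock_mul_clockProj]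

lemma HsplitOn_mulVec_kronVec_clockKet_zero_add_one {Pψ0 Pψ1 : Matrix α α ℂ} {v : α → ℂ}
    (hv : Pψ1 *ᵥ v = 0) :
    HsplitOn 3 Pψ0 Pψ1 0 1 2 *ᵥ kronVec v (clockKet ℂ 3 0 + clockKet ℂ 3 1) = 0 := by
  simp [HsplitOn_eq, add_mulVec, kronecker_mulVec_kronVec, hv, mulVec_add,
    clock1_P1_mulVec_clockKet_of_ne, splitClock_mulVec_clockKet_add_clockKet.1]

lemma HsplitOn_mulVec_kronVec_clockKet_zero_add_two {Pψ0 Pψ1 : Matrix α α ℂ} {v : α → ℂ}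
    (hv : Pψ0 *ᵥ v = 0) :
    HsplitOn 3 Pψ0 Pψ1 0 1 2 *ᵥ kronVec v (clockKet ℂ 3 0 + clockKet ℂ 3 2) = 0 := by
  simp [HsplitOn_eq, add_mulVec, kronecker_mulVec_kronVec, hv, mulVec_add,
    clock1_P1_mulVec_clockKet_of_ne, splitClock_mulVec_clockKet_add_clockKet.2]

def splitPenaltyVecs (ψ0 ψ1 : α → ℂ) : Fin 4 → α × (Fin 3 → Bool) → ℂ :=
  ![kronVec ψ1 (clockKet ℂ 3 1), kronVec ψ0 (clockKet ℂ 3 2),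
    kronVec ψ0 (clockKet ℂ 3 0 - clockKet ℂ 3 1 - clockKet ℂ 3 2),
    kronVec ψ1 (clockKet ℂ 3 0 - clockKet ℂ 3 1 - clockKet ℂ 3 2)]

lemma compress_HsplitOn_eq_sum (hψ : vecMulVec ψ0 (star ψ0) + vecMulVec ψ1 (star ψ1) = 1) :
    (1 ⊗ₖ clockProj 3) * HsplitOn 3 (vecMulVec ψ0 (star ψ0)) (vecMulVec ψ1 (star ψ1)) 0 1 2 *
        (1 ⊗ₖ clockProj 3) =
      ∑ k, vecMulVec (splitPenaltyVecs ψ0 ψ1 k) (star (splitPenaltyVecs ψ0 ψ1 k)) := by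
  rw [compress_HsplitOn, ← hψ, add_kronecker]
  simp [Fin.sum_univ_four, splitPenaltyVecs, vecMulVec_kronecker_vecMulVec, star_kronVec,
    add_assoc]

lemma mem_span_of_orthogonal_splitPenaltyVecs
    (hψ : vecMulVec ψ0 (star ψ0) + vecMulVec ψ1 (star ψ1) = 1) {x : α × (Fin 3 → Bool) → ℂ}
    (hx : (1 ⊗ₖ clockProj 3) *ᵥ x = x) (h : ∀ k, star (splitPenaltyVecs ψ0 ψ1 k) ⬝ᵥ x = 0) :
    x ∈ Submodule.span ℂ {kronVec ψ0 (clockKet ℂ 3 0 + clockKet ℂ 3 1),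
      kronVec ψ1 (clockKet ℂ 3 0 + clockKet ℂ 3 2)} := by
  have hexp := one_kronecker_clockProj_mulVec ![ψ0, ψ1] (by simpa using hψ) x
  simp only [Fin.sum_univ_two, Fin.sum_univ_three, Matrix.cons_val_zero, Matrix.cons_val_one,
    hx] at hexp
  set w := clockKet ℂ 3 0 - clockKet ℂ 3 1 - clockKet ℂ 3 2
  have hc11 : star (kronVec ψ1 (clockKet ℂ 3 1)) ⬝ᵥ x = 0 := h 0
  have hc02 : star (kronVec ψ0 (clockKet ℂ 3 2)) ⬝ᵥ x = 0 := h 1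
  have hc0w : star (kronVec ψ0 w) ⬝ᵥ x = 0 := h 2
  have hc1w : star (kronVec ψ1 w) ⬝ᵥ x = 0 := h 3
  simp only [w, kronVec_sub_right, star_sub, sub_dotProduct] at hc0w hc1w
  have hc01 : star (kronVec ψ0 (clockKet ℂ 3 1)) ⬝ᵥ x =
      star (kronVec ψ0 (clockKet ℂ 3 0)) ⬝ᵥ x := by
    linear_combination -hc0w - hc02
  have hc12 : star (kronVec ψ1 (clockKet ℂ 3 2)) ⬝ᵥ x =
      star (kronVec ψ1 (clockKet ℂ 3 0)) ⬝ᵥ x := by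
    linear_combination -hc1w - hc11
  rw [Submodule.mem_span_pair]
  refine ⟨star (kronVec ψ0 (clockKet ℂ 3 0)) ⬝ᵥ x, star (kronVec ψ1 (clockKet ℂ 3 0)) ⬝ᵥ x, ?_⟩
  conv_rhs => rw [hexp, hc01, hc12, hc11, hc02]
  simp only [kronVec_add_right]
  module

lemma ker_compress_HsplitOn_inf_range
    (hψ : vecMulVec ψ0 (star ψ0) + vecMulVec ψ1 (star ψ1) = 1)
    (hP1ψ0 : vecMulVec ψ1 (star ψ1) *ᵥ ψ0 = 0) (hP0ψ1 : vecMulVec ψ0 (star ψ0) *ᵥ ψ1 = 0) :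
    LinearMap.ker ((1 ⊗ₖ clockProj 3) *
        HsplitOn 3 (vecMulVec ψ0 (star ψ0)) (vecMulVec ψ1 (star ψ1)) 0 1 2 *
          (1 ⊗ₖ clockProj 3)).mulVecLin ⊓
      LinearMap.range ((1 : Matrix α α ℂ) ⊗ₖ clockProj 3).mulVecLin =
    Submodule.span ℂ {kronVec ψ0 (clockKet ℂ 3 0 + clockKet ℂ 3 1),
      kronVec ψ1 (clockKet ℂ 3 0 + clockKet ℂ 3 2)} := by
  set Pr : Matrix (α × (Fin 3 → Bool)) (α × (Fin 3 → Bool)) ℂ := 1 ⊗ₖ clockProj 3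
  have hPr_fix (ψ : α → ℂ) (s t : Fin 3) :
      Pr *ᵥ kronVec ψ (clockKet ℂ 3 s + clockKet ℂ 3 t) =
        kronVec ψ (clockKet ℂ 3 s + clockKet ℂ 3 t) := by
    simp [Pr, kronecker_mulVec_kronVec, mulVec_add, clockProj_mulVec_clockKet]
  apply le_antisymm
  · rintro x ⟨hker, y, rfl⟩
    have hPr : Pr * Pr = Pr := by
      rw [← mul_kronecker_mul, Matrix.one_mul, clockProj_mul_self]
    refine mem_span_of_orthogonal_splitPenaltyVecs hψ
      (by rw [mulVecLin_apply, mulVec_mulVec, hPr]) fun k => ?_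
    refine dotProduct_eq_zero_of_sum_vecMulVec_mulVec_eq_zero _ ?_ k
    rw [← compress_HsplitOn_eq_sum hψ]
    exact hker
  · rw [Submodule.span_le]
    rintro _ (rfl | rfl)
    · refine ⟨?_, _, hPr_fix ψ0 0 1⟩
      rw [SetLike.mem_coe, LinearMap.mem_ker, mulVecLin_apply, ← mulVec_mulVec, hPr_fix,
        ← mulVec_mulVec, HsplitOn_mulVec_kronVec_clockKet_zero_add_one hP1ψ0, mulVec_zero]
    · refine ⟨?_, _, hPr_fix ψ1 0 2⟩
      rw [SetLike.mem_coe, LinearMap.mem_ker, mulVecLin_apply, ← mulVec_mulVec, hPr_fix,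
        ← mulVec_mulVec, HsplitOn_mulVec_kronVec_clockKet_zero_add_two hP0ψ1, mulVec_zero]

end Compression

lemma vecMulVec_add_vecMulVec_eq_one {ψ0 ψ1 : Fin 2 → ℂ} (h00 : star ψ0 ⬝ᵥ ψ0 = 1)
    (h11 : star ψ1 ⬝ᵥ ψ1 = 1) (h01 : star ψ0 ⬝ᵥ ψ1 = 0) :
    vecMulVec ψ0 (star ψ0) + vecMulVec ψ1 (star ψ1) = 1 := by
  have h10 : star ψ1 ⬝ᵥ ψ0 = 0 := by rw [star_dotProduct, h01, star_zero]
  simpa using sum_vecMulVec_star_eq_one_of_orthonormal ![ψ0, ψ1] fun k l => by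
    fin_cases k <;> fin_cases l <;> simp [h00, h11, h01, h10]

theorem stmt_12 (ψ0 ψ1 : Fin 2 → ℂ)
    (h00 : ∑ i, starRingEnd ℂ (ψ0 i) * ψ0 i = 1)
    (h11 : ∑ i, starRingEnd ℂ (ψ1 i) * ψ1 i = 1)
    (h01 : ∑ i, starRingEnd ℂ (ψ0 i) * ψ1 i = 0) :
    let Hsp : Matrix (Fin 2 × (Fin 3 → Bool)) (Fin 2 × (Fin 3 → Bool)) ℂ :=
      HsplitOn 3 (Matrix.vecMulVec ψ0 (star ψ0)) (Matrix.vecMulVec ψ1 (star ψ1)) 0 1 2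
    let Pr : Matrix (Fin 2 × (Fin 3 → Bool)) (Fin 2 × (Fin 3 → Bool)) ℂ :=
      (1 : Matrix (Fin 2) (Fin 2) ℂ) ⊗ₖ clockProj 3
    let φ0 : Fin 2 × (Fin 3 → Bool) → ℂ := fun r =>
      (Real.sqrt 2 : ℂ)⁻¹ * ψ0 r.1 *
        ((if r.2 = oneHot 3 0 then 1 else 0) + (if r.2 = oneHot 3 1 then 1 else 0))
    let φ1 : Fin 2 × (Fin 3 → Bool) → ℂ := fun r =>
      (Real.sqrt 2 : ℂ)⁻¹ * ψ1 r.1 *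
        ((if r.2 = oneHot 3 0 then 1 else 0) + (if r.2 = oneHot 3 2 then 1 else 0))
    Hsp.IsHermitian ∧
    (Pr * Hsp * Pr).PosSemidef ∧
    LinearMap.ker (Pr * Hsp * Pr).mulVecLin ⊓ LinearMap.range Pr.mulVecLin
      = Submodule.span ℂ {φ0, φ1} ∧
    Hsp.mulVec φ0 = 0 ∧ Hsp.mulVec φ1 = 0 := by
  intro Hsp Pr φ0 φ1
  have hP1ψ0 : vecMulVec ψ1 (star ψ1) *ᵥ ψ0 = 0 := by
    rw [vecMulVec_mulVec, star_dotProduct, show star ψ0 ⬝ᵥ ψ1 = 0 from h01]; simp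
  have hP0ψ1 : vecMulVec ψ0 (star ψ0) *ᵥ ψ1 = 0 := by
    rw [vecMulVec_mulVec, show star ψ0 ⬝ᵥ ψ1 = 0 from h01]; simp
  have hψ := vecMulVec_add_vecMulVec_eq_one h00 h11 h01
  have hφ0 : φ0 = (Real.sqrt 2 : ℂ)⁻¹ • kronVec ψ0 (clockKet ℂ 3 0 + clockKet ℂ 3 1) := by
    funext r; simp [φ0, clockKet, mul_assoc]
  have hφ1 : φ1 = (Real.sqrt 2 : ℂ)⁻¹ • kronVec ψ1 (clockKet ℂ 3 0 + clockKet ℂ 3 2) := by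
    funext r; simp [φ1, clockKet, mul_assoc]
  refine ⟨HsplitOn_isHermitian (posSemidef_vecMulVec_self_star ψ0).1
      (posSemidef_vecMulVec_self_star ψ1).1 0 1 2, ?_, ?_, ?_, ?_⟩
  · rw [compress_HsplitOn_eq_sum hψ]
    exact posSemidef_sum _ fun k _ => posSemidef_vecMulVec_self_star _
  · rw [hφ0, hφ1, span_pair_smul_of_isUnit (by simp), ker_compress_HsplitOn_inf_range hψ hP1ψ0 hP0ψ1]
  · rw [hφ0, mulVec_smul, HsplitOn_mulVec_kronVec_clockKet_zero_add_one hP1ψ0, smul_zero]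
  · rw [hφ1, mulVec_smul, HsplitOn_mulVec_kronVec_clockKet_zero_add_two hP0ψ1, smul_zero]
end

section
/- Let k ≥ 1, ζ = exp(2πi/2^k) ∈ ℂ, and d = 2^{k−1}. Let N ≥ 1 and let H ∈ ℂ^{N×N} be a Hermitian matrix that is 1-sparse (every row and every column has at most one nonzero entry) and whose entries lie in ℤ[ζ] with all coordinates bounded in absolute value by 2^L − 1; i.e., each entry equals ∑_{m=0}^{d−1} b_m ζ^m with b_m ∈ ℤ, |b_m| < 2^L. Then there exist matrices U^{l,i} ∈ ℂ^{N×N}, for l ∈ {0,…,L−1} and i ∈ {1,…,2^{k+1}}, each of which is unitary and 1-sparse with every nonzero entry of the form ±ζ^m for some m ∈ {0,…,d−1}, such that H = ∑_{l=0}^{L−1} ∑_{i=1}^{2^{k+1}} 2^{l−1} U^{l,i}. -/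
open Matrix

/-! Each coordinate `b` with `|b| < 2 ^ L` has a signed binary expansion `b = ∑ 2 ^ l δ_l` with
`δ_l ∈ {-1, 0, 1}`, and `2 δ` is a sum of four signs; so every entry of `H` is
`∑_l 2 ^ (l - 1) ∑_{m, j} ±ζ ^ m`. Hermiticity turns the sparsity pattern of `H` into an
involution `σ`, and placing the `(l, m, j)`-th term of each row `r` at position `(r, σ r)` gives a
permutation matrix scaled by unimodular entries, hence a 1-sparse unitary. -/

theorem Nat.sum_range_two_pow_mul_testBit {L a : ℕ} (ha : a < 2 ^ L) :
    ∑ l ∈ Finset.range L, 2 ^ l * (a.testBit l).toNat = a := by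
  induction L generalizing a with
  | zero => simp_all
  | succ L ih =>
    rw [Finset.sum_range_succ', Nat.testBit_zero]
    simp_rw [Nat.testBit_succ, pow_succ, mul_comm _ 2, mul_assoc, ← Finset.mul_sum]
    rw [ih (by omega)]
    rcases Nat.mod_two_eq_zero_or_one a with h | h <;> simp [h] <;> omega

theorem Int.exists_signed_binary_digits {L : ℕ} {a : ℤ} (ha : |a| < 2 ^ L) :
    ∃ δ : ℕ → ℤ, (∀ l, |δ l| ≤ 1) ∧ ∑ l ∈ Finset.range L, 2 ^ l * δ l = a := by
  refine ⟨fun l => a.sign * (a.natAbs.testBit l).toNat, fun l => ?_, ?_⟩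
  · rw [abs_mul]
    cases a.natAbs.testBit l <;> rcases Int.sign_trichotomy a with h | h | h <;> simp [h]
  · have hlt : a.natAbs < 2 ^ L := by
      rw [Int.abs_eq_natAbs] at ha
      exact_mod_cast ha
    have hbits := congrArg ((↑) : ℕ → ℤ) (Nat.sum_range_two_pow_mul_testBit hlt)
    push_cast at hbits
    simp_rw [mul_left_comm _ a.sign, ← Finset.mul_sum]
    rw [hbits, Int.sign_mul_abs]

theorem Int.exists_four_signs_sum_eq_two_mul {d : ℤ} (hd : |d| ≤ 1) :
    ∃ s : Fin 4 → ℤ, (∀ j, s j = 1 ∨ s j = -1) ∧ ∑ j, s j = 2 * d := by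
  obtain rfl | rfl | rfl : d = -1 ∨ d = 0 ∨ d = 1 := by grind
  · exact ⟨![1, -1, -1, -1], by decide, by decide⟩
  · exact ⟨![1, -1, 1, -1], by decide, by decide⟩
  · exact ⟨![1, -1, 1, 1], by decide, by decide⟩

theorem Int.exists_signs_cast_eq_sum_zpow (K : Type*) [Field K] [CharZero K] {L : ℕ} {a : ℤ}
    (ha : |a| < 2 ^ L) :
    ∃ s : Fin L → Fin 4 → ℤ, (∀ l j, s l j = 1 ∨ s l j = -1) ∧
      (a : K) = ∑ l : Fin L, (2 : K) ^ ((l : ℕ) - 1 : ℤ) * ∑ j, (s l j : K) := by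
  obtain ⟨δ, hδ, rfl⟩ := Int.exists_signed_binary_digits ha
  choose s hs hsum using fun l => Int.exists_four_signs_sum_eq_two_mul (hδ l)
  refine ⟨fun l => s l, fun l => hs l, ?_⟩
  rw [Fin.sum_univ_eq_sum_range (fun l => (2 : K) ^ (l - 1 : ℤ) * ∑ j, (s l j : K)), Int.cast_sum]
  refine Finset.sum_congr rfl fun l _ => ?_
  rw [← Int.cast_sum, hsum, zpow_sub_one₀ two_ne_zero, zpow_natCast]
  push_cast
  field_simp

namespace Matrix

variable {n R : Type*} [DecidableEq n]

def monomialMatrix [Zero R] (σ : Equiv.Perm n) (c : n → R) : Matrix n n R :=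
  (diagonal c).submatrix id σ.symm

section Zero

variable [Zero R] {σ : Equiv.Perm n} {c : n → R}

theorem monomialMatrix_apply (r s : n) :
    monomialMatrix σ c r s = if σ r = s then c r else 0 := by
  simp [monomialMatrix, diagonal_apply, Equiv.eq_symm_apply]

theorem eq_of_monomialMatrix_apply_ne_zero {r s : n} (h : monomialMatrix σ c r s ≠ 0) :
    σ r = s := by
  by_contra hne
  simp [monomialMatrix_apply, hne] at h

theorem monomialMatrix_apply_of_ne_zero {r s : n} (h : monomialMatrix σ c r s ≠ 0) :
    monomialMatrix σ c r s = c r := by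
  rw [monomialMatrix_apply, if_pos (eq_of_monomialMatrix_apply_ne_zero h)]

theorem subsingleton_setOf_monomialMatrix_row_ne_zero (r : n) :
    {s | monomialMatrix σ c r s ≠ 0}.Subsingleton := fun _ hs _ ht =>
  (eq_of_monomialMatrix_apply_ne_zero hs).symm.trans (eq_of_monomialMatrix_apply_ne_zero ht)

theorem subsingleton_setOf_monomialMatrix_col_ne_zero (s : n) :
    {r | monomialMatrix σ c r s ≠ 0}.Subsingleton := fun _ hr _ ht =>
  σ.injective <| (eq_of_monomialMatrix_apply_ne_zero hr).trans
    (eq_of_monomialMatrix_apply_ne_zero ht).symm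

theorem smul_monomialMatrix {S : Type*} [SMulZeroClass S R] (a : S) :
    a • monomialMatrix σ c = monomialMatrix σ (a • c) := by
  ext r s
  rw [smul_apply, monomialMatrix_apply, monomialMatrix_apply]
  split_ifs <;> simp

end Zero

theorem sum_monomialMatrix [AddCommMonoid R] {ι : Type*} (t : Finset ι) (σ : Equiv.Perm n)
    (c : ι → n → R) : ∑ i ∈ t, monomialMatrix σ (c i) = monomialMatrix σ (∑ i ∈ t, c i) := by
  ext r s
  simp [monomialMatrix_apply, Matrix.sum_apply, Finset.sum_ite_irrel]

theorem conjTranspose_monomialMatrix_mul_self [Fintype n] [Semiring R] [StarRing R]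
    {σ : Equiv.Perm n} {c : n → R} (hc : ∀ r, star (c r) * c r = 1) :
    (monomialMatrix σ c)ᴴ * monomialMatrix σ c = 1 := by
  rw [monomialMatrix, conjTranspose_submatrix, diagonal_conjTranspose,
    ← submatrix_mul _ _ _ _ _ Function.bijective_id, diagonal_mul_diagonal]
  simp only [Pi.star_apply, hc, diagonal_one, submatrix_one_equiv]

theorem IsHermitian.exists_eq_monomialMatrix [AddMonoid R] [StarAddMonoid R]
    {H : Matrix n n R} (hH : H.IsHermitian) (hrow : ∀ r, {s | H r s ≠ 0}.Subsingleton) :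
    ∃ σ : Equiv.Perm n, H = monomialMatrix σ fun r => H r (σ r) := by
  classical
  let σ : n → n := fun r => if h : ∃ s, H r s ≠ 0 then h.choose else r
  have hσ : ∀ r s, H r s ≠ 0 → σ r = s := fun r s hs =>
    have h : ∃ s, H r s ≠ 0 := ⟨s, hs⟩
    (dif_pos h).trans (hrow r h.choose_spec hs)
  have hinv : Function.Involutive σ := by
    intro r
    by_cases h : ∃ s, H r s ≠ 0
    · obtain ⟨s, hs⟩ := h
      rw [hσ r s hs]
      exact hσ s r (by rwa [← hH.apply s r, star_ne_zero])
    · simp only [σ, dif_neg h]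
  refine ⟨hinv.toPerm, ?_⟩
  ext r s
  rw [monomialMatrix_apply]
  split_ifs with h
  · rw [← h]
  · by_contra hne
    exact h (hσ r s hne)

end Matrix

theorem exists_sum_intCast_mul_pow_eq_sum_two_zpow_mul {K : Type*} [Field K] [CharZero K]
    (ζ : K) {d L : ℕ} {b : Fin d → ℤ} (hb : ∀ m, |b m| < 2 ^ L) :
    ∃ c : Fin L → Fin d × Fin 4 → K, (∀ l p, c l p = ζ ^ (p.1 : ℕ) ∨ c l p = -ζ ^ (p.1 : ℕ)) ∧
      ∑ m, (b m : K) * ζ ^ (m : ℕ) = ∑ l : Fin L, (2 : K) ^ ((l : ℕ) - 1 : ℤ) * ∑ p, c l p := by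
  choose s hs hbs using fun m => Int.exists_signs_cast_eq_sum_zpow K (hb m)
  refine ⟨fun l p => s p.1 l p.2 * ζ ^ (p.1 : ℕ), fun l p => ?_, ?_⟩
  · rcases hs p.1 l p.2 with h | h <;> simp [h]
  · simp only [hbs, Finset.sum_mul, Fintype.sum_prod_type, Finset.mul_sum, mul_assoc]
    exact Finset.sum_comm

theorem stmt_15_general (k : ℕ) (hk : 1 ≤ k) (L N : ℕ) (ζ : ℂ)
    (hζ : ζ = Complex.exp (2 * Real.pi * Complex.I / (2 ^ k)))
    (H : Matrix (Fin N) (Fin N) ℂ) (hHerm : H.IsHermitian)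
    (hrow : ∀ r, {j | H r j ≠ 0}.Subsingleton)
    (hent : ∀ r s, ∃ b : Fin (2 ^ (k - 1)) → ℤ, (∀ m, |b m| < 2 ^ L) ∧
      H r s = ∑ m, (b m : ℂ) * ζ ^ (m : ℕ)) :
    ∃ U : Fin L → Fin (2 ^ (k + 1)) → Matrix (Fin N) (Fin N) ℂ,
      (∀ l i,
        (U l i)ᴴ * U l i = 1 ∧
        (∀ r, {j | U l i r j ≠ 0}.Subsingleton) ∧
        (∀ s, {r | U l i r s ≠ 0}.Subsingleton) ∧
        (∀ r s, U l i r s ≠ 0 →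
          ∃ m : Fin (2 ^ (k - 1)), U l i r s = ζ ^ (m : ℕ) ∨ U l i r s = -ζ ^ (m : ℕ))) ∧
      H = ∑ l : Fin L, ∑ i, ((2 : ℂ) ^ (((l : ℕ) : ℤ) - 1)) • U l i := by
  obtain ⟨σ, hσ⟩ := hHerm.exists_eq_monomialMatrix hrow
  choose b hb hHb using fun r => hent r (σ r)
  choose c hc hbc using fun r => exists_sum_intCast_mul_pow_eq_sum_two_zpow_mul ζ (hb r)
  have hζ_unit : starRingEnd ℂ ζ * ζ = 1 := by
    have : ‖ζ‖ = 1 := hζ ▸ by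
      simpa using (Complex.isPrimitiveRoot_exp (2 ^ k) (by positivity)).norm'_eq_one (by positivity)
    rw [Complex.conj_mul', this]
    norm_num
  let e : Fin (2 ^ (k - 1)) × Fin 4 ≃ Fin (2 ^ (k + 1)) :=
    finProdFinEquiv.trans (finCongr (by rw [show 4 = 2 ^ 2 from rfl, ← pow_add]; congr 1; omega))
  refine ⟨fun l i => monomialMatrix σ fun r => c r l (e.symm i), fun l i => ⟨?_,
    subsingleton_setOf_monomialMatrix_row_ne_zero, subsingleton_setOf_monomialMatrix_col_ne_zero,
    fun r t h => ⟨(e.symm i).1, ?_⟩⟩, ?_⟩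
  · refine conjTranspose_monomialMatrix_mul_self fun r => ?_
    rcases hc r l (e.symm i) with h | h <;> simp [h, ← mul_pow, hζ_unit]
  · dsimp only at h ⊢
    rw [monomialMatrix_apply_of_ne_zero h]
    exact hc r l _
  · refine hσ.trans ?_
    simp_rw [smul_monomialMatrix, sum_monomialMatrix]
    congr 1
    funext r
    simp only [hHb, hbc, Finset.sum_apply, Pi.smul_apply, smul_eq_mul, ← Finset.mul_sum,
      Equiv.sum_comp]

/-- A 1-sparse Hamiltonian with entries in `ℤ[ζ_{2^k}]` of bounded coordinates is a
linear combination, with coefficients `2^{l-1}`, of 1-sparse unitaries whose nonzero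
entries are `±ζ^m`. -/
theorem stmt_15 (k : ℕ) (hk : 1 ≤ k) (L N : ℕ) (hN : 1 ≤ N) (ζ : ℂ)
    (hζ : ζ = Complex.exp (2 * Real.pi * Complex.I / (2 ^ k)))
    (H : Matrix (Fin N) (Fin N) ℂ) (hHerm : H.IsHermitian)
    (hrow : ∀ r, {j | H r j ≠ 0}.Subsingleton)
    (hcol : ∀ s, {i | H i s ≠ 0}.Subsingleton)
    (hent : ∀ r s, ∃ b : Fin (2 ^ (k - 1)) → ℤ, (∀ m, |b m| < 2 ^ L) ∧
      H r s = ∑ m, (b m : ℂ) * ζ ^ (m : ℕ)) :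
    ∃ U : Fin L → Fin (2 ^ (k + 1)) → Matrix (Fin N) (Fin N) ℂ,
      (∀ l i,
        (U l i)ᴴ * U l i = 1 ∧
        (∀ r, {j | U l i r j ≠ 0}.Subsingleton) ∧
        (∀ s, {r | U l i r s ≠ 0}.Subsingleton) ∧
        (∀ r s, U l i r s ≠ 0 →
          ∃ m : Fin (2 ^ (k - 1)), U l i r s = ζ ^ (m : ℕ) ∨ U l i r s = -ζ ^ (m : ℕ))) ∧
      H = ∑ l : Fin L, ∑ i, ((2 : ℂ) ^ (((l : ℕ) : ℤ) - 1)) • U l i :=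
  stmt_15_general k hk L N ζ hζ H hHerm hrow hent
end

section
/- Let n ≥ 1, ζ_n = exp(2πi/n) ∈ ℂ, and let G_1, …, G_s be finitely many complex matrices, with G_i of size 2^{m_i} × 2^{m_i} and all entries in ℚ(ζ_n). Then there exist integers a, b, c with a² + b² = c² and c prime, such that the 2×2 orthogonal matrix W = (1/c)·[[a, b], [−b, a]] cannot be synthesized from these gates even with ancillas: for every r ≥ 0 there is no matrix C in the multiplicative submonoid of ℂ^{2^{1+r} × 2^{1+r}} generated by all 2^{1+r} × 2^{1+r} permutation matrices together with all matrices G_i ⊗ I_{2^{1+r−m_i}} (for those i with m_i ≤ 1+r) satisfying C(ψ ⊗ e_0) = (Wψ) ⊗ e_0 for all ψ ∈ ℂ², where e_0 ∈ ℂ^{2^r} denotes the first standard basis vector (the all-zero ancilla state). -/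
/-!
All gate entries lie in `ℚ(ζ)`, so they are algebraic and there is an integer `D ≠ 0` such that
`D` times each of them is an algebraic integer. The `x` with `D ^ k * x` integral for some `k` form
a semiring, which therefore contains every entry of every circuit (permutation matrices have
entries `0` and `1`). A circuit synthesizing `W = c⁻¹ [[a, b], [-b, a]]` with ancillas has the
rational number `a / c` as a diagonal entry, so `D ^ k * a / c ∈ ℤ` for some `k`. This fails once
`c` is a prime dividing neither `D` nor `a`: take a large prime `p ≡ 1 mod 4`, write
`p = u² + v²` and use the triple `(2uv, u² - v², p)`.
-/

open Matrix Kronecker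

/-- For `D ≠ 0`, the integral closure of `ℤ[1/D]` in `A`. -/
def integralAway (A : Type*) [CommRing A] (D : ℤ) : Subsemiring A where
  carrier := {x | ∃ k : ℕ, IsIntegral ℤ ((D : A) ^ k * x)}
  zero_mem' := ⟨0, by simpa using isIntegral_zero⟩
  one_mem' := ⟨0, by simpa using isIntegral_one⟩
  add_mem' := by
    rintro x y ⟨k, hx⟩ ⟨l, hy⟩
    refine ⟨k + l, ?_⟩
    rw [show (D : A) ^ (k + l) * (x + y) =
      (D : A) ^ l * ((D : A) ^ k * x) + (D : A) ^ k * ((D : A) ^ l * y) by ring]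
    exact (((isIntegral_intCast D).pow l).mul hx).add (((isIntegral_intCast D).pow k).mul hy)
  mul_mem' := by
    rintro x y ⟨k, hx⟩ ⟨l, hy⟩
    refine ⟨k + l, ?_⟩
    rw [show (D : A) ^ (k + l) * (x * y) = ((D : A) ^ k * x) * ((D : A) ^ l * y) by ring]
    exact hx.mul hy

variable {A : Type*} [CommRing A] {D : ℤ}

theorem exists_ne_zero_forall_mem_integralAway {ι : Type*} [Fintype ι] (f : ι → A)
    (hf : ∀ i, IsAlgebraic ℤ (f i)) : ∃ D ≠ 0, ∀ i, f i ∈ integralAway A D := by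
  classical
  choose y hy hint using fun i ↦ (hf i).exists_integral_multiple
  refine ⟨∏ i, y i, Finset.prod_ne_zero_iff.mpr fun i _ ↦ hy i, fun i ↦ ⟨1, ?_⟩⟩
  rw [← Finset.prod_erase_mul _ _ (Finset.mem_univ i), pow_one, Int.cast_mul, mul_assoc,
    ← zsmul_eq_mul (f i)]
  exact (isIntegral_intCast _).mul (hint i)

theorem Rat.exists_intCast_eq_pow_mul_of_mem_integralAway {K : Type*} [Field K] [CharZero K]
    {q : ℚ} (h : (q : K) ∈ integralAway K D) : ∃ (k : ℕ) (z : ℤ), (z : ℚ) = D ^ k * q := by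
  obtain ⟨k, hk⟩ := h
  refine ⟨k, ?_⟩
  have : IsIntegral ℤ ((D : ℚ) ^ k * q) := by
    rw [← isIntegral_algebraMap_iff (algebraMap ℚ K).injective]
    simpa using hk
  simpa using IsIntegrallyClosed.isIntegral_iff.mp this

theorem Prime.dvd_of_inv_mul_mem_integralAway {K : Type*} [Field K] [CharZero K] {p a : ℤ}
    (hp : Prime p) (hpD : ¬ p ∣ D) (h : (p : K)⁻¹ * a ∈ integralAway K D) : p ∣ a := by
  have hq : ((a / p : ℚ) : K) ∈ integralAway K D := by
    rw [div_eq_inv_mul]; push_cast; exact h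
  obtain ⟨k, z, hz⟩ := Rat.exists_intCast_eq_pow_mul_of_mem_integralAway hq
  have hp0 : (p : ℚ) ≠ 0 := by exact_mod_cast hp.ne_zero
  have : p ∣ D ^ k * a := ⟨z, by
    rw [mul_div_assoc', eq_div_iff hp0] at hz; exact_mod_cast hz.symm.trans (mul_comm _ _)⟩
  exact (hp.dvd_or_dvd this).resolve_left fun h ↦ hpD (hp.dvd_of_dvd_pow h)

theorem Nat.Prime.not_dvd_of_sq_add_sq {p u v : ℕ} (hp : p.Prime) (h : u ^ 2 + v ^ 2 = p) :
    ¬ p ∣ u := by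
  rintro ⟨w, rfl⟩
  rcases Nat.eq_zero_or_pos w with rfl | hw
  · exact hp.prime.not_isSquare ⟨v, by simpa [sq] using h.symm⟩
  · have := Nat.le_mul_of_pos_right p hw
    nlinarith [hp.two_le]

theorem exists_sq_add_sq_eq_prime_sq (D : ℤ) (hD : D ≠ 0) :
    ∃ a b p : ℤ, a ^ 2 + b ^ 2 = p ^ 2 ∧ Prime p ∧ ¬ p ∣ D ∧ ¬ p ∣ a := by
  obtain ⟨p, hp, hDp, hp1⟩ := Nat.exists_prime_gt_modEq_one (k := 4) D.natAbs (by norm_num)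
  have : Fact p.Prime := ⟨hp⟩
  obtain ⟨u, v, huv⟩ := Nat.Prime.sq_add_sq (p := p) (by unfold Nat.ModEq at hp1; omega)
  refine ⟨2 * u * v, (u : ℤ) ^ 2 - v ^ 2, p, by rw [← huv]; push_cast; ring,
    Nat.prime_iff_prime_int.mp hp, fun h ↦ ?_, fun h ↦ ?_⟩
  · exact hDp.not_ge (Nat.le_of_dvd (Int.natAbs_pos.mpr hD) (Int.natCast_dvd.mp h))
  · have h : p ∣ 2 * u * v := by exact_mod_cast h
    rcases (Nat.Prime.dvd_mul hp).mp h with h | h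
    · rcases (Nat.Prime.dvd_mul hp).mp h with h | h
      · have := Nat.le_of_dvd two_pos h
        have := hp.two_le
        unfold Nat.ModEq at hp1
        omega
      · exact hp.not_dvd_of_sq_add_sq huv h
    · exact hp.not_dvd_of_sq_add_sq ((add_comm _ _).trans huv) h

theorem isIntegral_exp_two_pi_I_div (n : ℕ) :
    IsIntegral ℤ (Complex.exp (2 * Real.pi * Complex.I / n)) := by
  rcases Nat.eq_zero_or_pos n with rfl | hn
  · simpa using isIntegral_one
  · exact (Complex.isPrimitiveRoot_exp n hn.ne').isIntegral hn

theorem isAlgebraic_int_of_mem_adjoin_simple {K : Type*} [Field K] [CharZero K] {ζ x : K}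
    (hζ : IsIntegral ℤ ζ) (hx : x ∈ IntermediateField.adjoin ℚ {ζ}) : IsAlgebraic ℤ x := by
  rw [IsFractionRing.isAlgebraic_iff ℤ ℚ]
  exact ((IntermediateField.isAlgebraic_adjoin_simple (hζ.tower_top (A := ℚ))).isAlgebraic
    ⟨x, hx⟩).algebraMap

namespace Matrix

variable {ι α : Type*} [DecidableEq ι] [Semiring α]

theorem apply_mem_of_mem_closure [Fintype ι] {R : Subsemiring α} {S : Set (Matrix ι ι α)}
    (hS : ∀ M ∈ S, ∀ i j, M i j ∈ R) {C : Matrix ι ι α} (hC : C ∈ Submonoid.closure S) :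
    ∀ i j, C i j ∈ R := by
  induction hC using Submonoid.closure_induction with
  | mem M hM => exact hS M hM
  | one => intro i j; rw [one_apply]; split_ifs <;> simp
  | mul A B _ _ hA hB => exact fun i j ↦ sum_mem fun k _ ↦ mul_mem (hA i k) (hB k j)

theorem permMatrix_apply_mem (R : Subsemiring α) (σ : Equiv.Perm ι) (i j : ι) :
    σ.permMatrix α i j ∈ R := by
  rw [Equiv.Perm.permMatrix, PEquiv.toMatrix_apply]; split_ifs <;> simp

theorem reindex_kronecker_one_apply_mem {κ μ ν : Type*} [DecidableEq κ] (R : Subsemiring α)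
    {G : Matrix μ μ α} (hG : ∀ i j, G i j ∈ R) (e f : μ × κ ≃ ν) (i j : ν) :
    reindex e f (G ⊗ₖ (1 : Matrix κ κ α)) i j ∈ R := by
  rw [reindex_apply, submatrix_apply, kroneckerMap_apply, one_apply]
  split_ifs <;> simp [hG]

end Matrix

theorem single_kron_ancilla_zero {β ι R : Type*} [DecidableEq ι] [DecidableEq β]
    [MulZeroOneClass R] {b : ℕ} [NeZero b] (E : β × Fin b ≃ ι) (i : β) (x : R) :
    (fun p ↦ (Pi.single i x : β → R) (E.symm p).1 * (if ((E.symm p).2 : ℕ) = 0 then 1 else 0)) =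
      Pi.single (E (i, 0)) x := by
  funext q
  obtain ⟨⟨j, k⟩, rfl⟩ := E.surjective q
  simp only [E.symm_apply_apply, Pi.single_apply, E.injective.eq_iff, Prod.mk.injEq, Fin.ext_iff,
    Fin.val_zero]
  split_ifs <;> simp_all

/-- No finite gateset with entries in a cyclotomic field `ℚ(ζ_n)` can exactly synthesize
all Pythagorean single-qubit gates, even with `|0⟩`-initialized ancillas. -/
theorem stmt_17 (n : ℕ) (ζ : ℂ)
    (hζ : ζ = Complex.exp (2 * Real.pi * Complex.I / n))
    (s : ℕ) (m : Fin s → ℕ)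
    (G : ∀ i : Fin s, Matrix (Fin (2 ^ m i)) (Fin (2 ^ m i)) ℂ)
    (hG : ∀ i r c, G i r c ∈ IntermediateField.adjoin ℚ {ζ}) :
    ∃ a b c : ℤ, a ^ 2 + b ^ 2 = c ^ 2 ∧ Prime c ∧
      ∀ r : ℕ,
        -- the equivalence `Fin 2 × Fin (2^r) ≃ Fin (2^(1+r))` splitting off the first qubit
        ∀ E : Fin 2 × Fin (2 ^ r) ≃ Fin (2 ^ (1 + r)),
          (∀ p : Fin 2 × Fin (2 ^ r), ((E p : ℕ) = (p.1 : ℕ) * 2 ^ r + (p.2 : ℕ))) →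
          ¬ ∃ C ∈ Submonoid.closure
              (({P | ∃ σ : Equiv.Perm (Fin (2 ^ (1 + r))), P = σ.permMatrix ℂ} ∪
                {M | ∃ i : Fin s, ∃ h : m i ≤ 1 + r,
                  M = Matrix.reindex
                        (finProdFinEquiv.trans
                          (finCongr (by rw [← pow_add, Nat.add_sub_cancel' h])))
                        (finProdFinEquiv.trans
                          (finCongr (by rw [← pow_add, Nat.add_sub_cancel' h])))
                        (G i ⊗ₖ
                          (1 : Matrix (Fin (2 ^ (1 + r - m i))) (Fin (2 ^ (1 + r - m i))) ℂ))}) :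
                Set (Matrix (Fin (2 ^ (1 + r))) (Fin (2 ^ (1 + r))) ℂ)),
            ∀ ψ : Fin 2 → ℂ,
              C.mulVec (fun p => ψ (E.symm p).1 * (if ((E.symm p).2 : ℕ) = 0 then 1 else 0))
                = fun p =>
                    (((c : ℂ)⁻¹ • !![(a : ℂ), (b : ℂ); -(b : ℂ), (a : ℂ)]).mulVec ψ)
                        (E.symm p).1 *
                      (if ((E.symm p).2 : ℕ) = 0 then 1 else 0) := by
  classical
  obtain ⟨D, hD, hGD⟩ := exists_ne_zero_forall_mem_integralAway
    (fun t : Σ i, Fin (2 ^ m i) × Fin (2 ^ m i) ↦ G t.1 t.2.1 t.2.2)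
    fun t ↦ isAlgebraic_int_of_mem_adjoin_simple (hζ ▸ isIntegral_exp_two_pi_I_div n) (hG _ _ _)
  obtain ⟨a, b, p, hpyth, hp, hpD, hpa⟩ := exists_sq_add_sq_eq_prime_sq D hD
  refine ⟨a, b, p, hpyth, hp, fun r E _ ⟨C, hC, hsynth⟩ ↦ hpa ?_⟩
  have hCD : ∀ i j, C i j ∈ integralAway ℂ D := by
    refine Matrix.apply_mem_of_mem_closure ?_ hC
    rintro M (⟨σ, rfl⟩ | ⟨i, hi, rfl⟩)
    · exact Matrix.permMatrix_apply_mem _ σ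
    · exact Matrix.reindex_kronecker_one_apply_mem _ (fun j k ↦ hGD ⟨i, j, k⟩) _ _
  have hdiag : C (E (0, 0)) (E (0, 0)) = (p : ℂ)⁻¹ * a := by
    have h := congrFun (hsynth (Pi.single 0 1)) (E (0, 0))
    rw [single_kron_ancilla_zero] at h
    simpa using h
  exact hp.dvd_of_inv_mul_mem_integralAway hpD (hdiag ▸ hCD _ _)
end
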